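/- arXiv:2505.22478 — 3 statements merged into one kernel-verified Lean document; each statement's English description precedes it below -/
import Mathlib

section
/- Quantitative Kolmogorov continuity theorem (Lemma 2.8). Let B be a Banach space and let (X(t))_{t∈[0,1]} be a stochastic process on a probability space with almost surely continuous sample paths taking values in B. Let A > 0, let 0 < α < β < 1, and let q ≥ 1 satisfy β + 1/q ≤ 1. Assume that sup_{0 ≤ s < t ≤ 1} E[ ( ‖X(t) - X(s)‖_B / |t-s|^{β + 1/q} )^q ]^{1/q} ≤ A. Then there exists a constant C(α,β), depending only on α and β (and in particular uniform in q), such that E[ sup_{0 ≤ s < t ≤ 1} ( ‖X(t) - X(s)‖_B / |t-s|^α )^q ]^{1/q} ≤ C(α,β) · A. -/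
open MeasureTheory Real ENNReal Filter

lemma qk_iSup_rpow {ι : Sort*} (f : ι → ℝ≥0∞) {q : ℝ} (hq : 0 < q) :
    (⨆ i, f i) ^ q = ⨆ i, f i ^ q := by
  apply le_antisymm
  · rw [← ENNReal.le_rpow_inv_iff hq]
    exact iSup_le fun i => (ENNReal.le_rpow_inv_iff hq).mpr
      (le_iSup (fun i => f i ^ q) i)
  · exact iSup_le fun i => ENNReal.rpow_le_rpow (le_iSup f i) hq.le

lemma qk_minkowski {Ω : Type} [MeasurableSpace Ω] (P : Measure Ω)
    (g : ℕ → Ω → ℝ≥0∞) (hg : ∀ n, AEMeasurable (g n) P) {q : ℝ} (hq : 1 ≤ q) :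
    (∫⁻ ω, (∑' n, g n ω) ^ q ∂P) ^ (1 / q) ≤ ∑' n, (∫⁻ ω, (g n ω) ^ q ∂P) ^ (1 / q) := by
  have hq0 : (0:ℝ) < q := lt_of_lt_of_le one_pos hq
  have hmeasS : ∀ N : ℕ, AEMeasurable (fun ω => ∑ n ∈ Finset.range N, g n ω) P := by
    intro N; exact Finset.aemeasurable_fun_sum _ fun i _ => hg i
  have fin : ∀ N : ℕ, (∫⁻ ω, (∑ n ∈ Finset.range N, g n ω) ^ q ∂P) ^ (1 / q)
      ≤ ∑ n ∈ Finset.range N, (∫⁻ ω, (g n ω) ^ q ∂P) ^ (1 / q) := by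
    intro N
    induction N with
    | zero =>
        simp [ENNReal.zero_rpow_of_pos hq0, hq0,
          ENNReal.zero_rpow_of_pos (by positivity : (0:ℝ) < 1 / q)]
    | succ N ih =>
        simp only [Finset.sum_range_succ]
        calc (∫⁻ ω, ((∑ n ∈ Finset.range N, g n ω) + g N ω) ^ q ∂P) ^ (1 / q)
            ≤ (∫⁻ ω, (∑ n ∈ Finset.range N, g n ω) ^ q ∂P) ^ (1 / q)
              + (∫⁻ ω, (g N ω) ^ q ∂P) ^ (1 / q) :=
              ENNReal.lintegral_Lp_add_le (hmeasS N) (hg N) hq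
          _ ≤ _ := add_le_add_left ih _
  have key : (∫⁻ ω, (∑' n, g n ω) ^ q ∂P)
      = ⨆ N : ℕ, ∫⁻ ω, (∑ n ∈ Finset.range N, g n ω) ^ q ∂P := by
    have : ∀ ω, (∑' n, g n ω) ^ q = ⨆ N : ℕ, (∑ n ∈ Finset.range N, g n ω) ^ q := by
      intro ω
      rw [ENNReal.tsum_eq_iSup_nat, qk_iSup_rpow _ hq0]
    simp_rw [this]
    refine lintegral_iSup' (fun N => (hmeasS N).pow_const q) ?_
    refine Filter.Eventually.of_forall fun ω => ?_
    intro N M hNM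
    exact ENNReal.rpow_le_rpow
      (Finset.sum_le_sum_of_subset (Finset.range_subset_range.2 hNM)) hq0.le
  rw [key]
  rw [one_div, ENNReal.rpow_inv_le_iff hq0]
  refine iSup_le fun N => ?_
  rw [← ENNReal.rpow_inv_le_iff hq0, ← one_div]
  exact (fin N).trans (ENNReal.sum_le_tsum _)


lemma qk_chain {E : Type*} [NormedAddCommGroup E] {f : ℝ → E}
    (hf : ContinuousOn f (Set.Icc 0 1)) {s t : ℝ} (hs : 0 ≤ s) (hst : s < t) (ht : t ≤ 1)
    (G : ℕ → ℝ≥0∞)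
    (hG : ∀ m : ℕ, ∀ a : ℤ, 0 ≤ a → a + 1 ≤ 2 ^ m →
      ENNReal.ofReal ‖f (((a : ℝ) + 1) / 2 ^ m) - f ((a : ℝ) / 2 ^ m)‖ ≤ G m)
    {n₀ : ℕ} (h1 : ((2:ℝ) ^ n₀)⁻¹ ≤ t - s) (h2 : t - s < 2 * ((2:ℝ) ^ n₀)⁻¹) :
    ENNReal.ofReal ‖f t - f s‖ ≤ ∑' i : ℕ, 2 * G (n₀ + i) := by
  have hs1 : s ≤ 1 := (le_of_lt hst).trans ht
  have ht0 : 0 < t := lt_of_le_of_lt hs hst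
  set σ : ℕ → ℤ := fun n => ⌈s * 2 ^ n⌉ with hσ
  set τ : ℕ → ℤ := fun n => ⌊t * 2 ^ n⌋ with hτ
  set sp : ℕ → ℝ := fun n => (σ n : ℝ) / 2 ^ n with hsp
  set tp : ℕ → ℝ := fun n => (τ n : ℝ) / 2 ^ n with htp
  have pow_pos : ∀ n : ℕ, (0:ℝ) < 2 ^ n := fun n => by positivity
  have hceil_le : ∀ n, s * 2 ^ n ≤ (σ n : ℝ) := fun n => by rw [hσ]; exact Int.le_ceil _
  have hceil_lt : ∀ n, (σ n : ℝ) < s * 2 ^ n + 1 := fun n => by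
    rw [hσ]; exact Int.ceil_lt_add_one _
  have hfloor_le : ∀ n, (τ n : ℝ) ≤ t * 2 ^ n := fun n => by rw [hτ]; exact Int.floor_le _
  have hfloor_lt : ∀ n, t * 2 ^ n < (τ n : ℝ) + 1 := fun n => by
    rw [hτ]; exact Int.lt_floor_add_one _
  have hpowR : ∀ n : ℕ, (2:ℝ) ^ (n+1) = 2 * 2 ^ n := fun n => by ring
  -- basic bounds
  have hσ0 : ∀ n, 0 ≤ σ n := fun n => by rw [hσ]; exact Int.ceil_nonneg (by positivity)
  have hσle : ∀ n, σ n ≤ 2 ^ n := by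
    intro n
    rw [hσ]
    refine Int.ceil_le.2 ?_
    push_cast
    nlinarith [pow_pos n]
  have hτ0 : ∀ n, 0 ≤ τ n := fun n => by
    rw [hτ]; exact Int.le_floor.2 (by push_cast; positivity)
  have hτle : ∀ n, τ n ≤ 2 ^ n := by
    intro n
    have : (τ n : ℝ) ≤ ((2 ^ n : ℤ) : ℝ) := by
      have := hfloor_le n
      push_cast
      nlinarith [pow_pos n]
    exact_mod_cast this
  -- level relations
  have hσstep : ∀ n, σ (n+1) ≤ 2 * σ n ∧ 2 * σ n ≤ σ (n+1) + 1 := by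
    intro n
    constructor
    · have : s * 2 ^ (n+1) ≤ ((2 * σ n : ℤ) : ℝ) := by
        push_cast
        rw [hpowR n]
        nlinarith [hceil_le n]
      rw [hσ]
      exact Int.ceil_le.2 this
    · have hlt : ((2 * σ n : ℤ) : ℝ) < ((σ (n+1) + 2 : ℤ) : ℝ) := by
        have ha := hceil_lt n
        have hb := hceil_le (n+1)
        push_cast
        rw [hpowR n] at hb
        nlinarith
      have := Int.cast_lt.mp hlt
      omega
  have hτstep : ∀ n, 2 * τ n ≤ τ (n+1) ∧ τ (n+1) ≤ 2 * τ n + 1 := by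
    intro n
    constructor
    · have : ((2 * τ n : ℤ) : ℝ) ≤ t * 2 ^ (n+1) := by
        push_cast
        rw [hpowR n]
        nlinarith [hfloor_le n]
      rw [hτ]
      exact Int.le_floor.2 this
    · have hlt : ((τ (n+1) : ℤ) : ℝ) < ((2 * τ n + 2 : ℤ) : ℝ) := by
        have ha := hfloor_lt n
        have hb := hfloor_le (n+1)
        push_cast
        rw [hpowR n] at hb
        nlinarith
      have := Int.cast_lt.mp hlt
      omega
  -- base relations at level n₀
  have hcancel : ((2:ℝ) ^ n₀)⁻¹ * 2 ^ n₀ = 1 := by field_simp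
  have hbase : σ n₀ ≤ τ n₀ ∧ τ n₀ ≤ σ n₀ + 1 := by
    have h3 : (1:ℝ) ≤ (t - s) * 2 ^ n₀ := by nlinarith [pow_pos n₀, h1, hcancel]
    have h4 : (t - s) * 2 ^ n₀ < 2 := by nlinarith [pow_pos n₀, h2, hcancel]
    constructor
    · have hle : ((σ n₀ : ℤ) : ℝ) ≤ t * 2 ^ n₀ := by nlinarith [hceil_lt n₀]
      have hfl : σ n₀ ≤ ⌊t * (2:ℝ) ^ n₀⌋ := Int.le_floor.2 hle
      rw [hτ]
      exact hfl
    · have hlt : ((τ n₀ : ℤ) : ℝ) < ((σ n₀ + 2 : ℤ) : ℝ) := by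
        push_cast
        nlinarith [hfloor_le n₀, hceil_le n₀]
      have := Int.cast_lt.mp hlt
      omega
  -- increment bounds between consecutive levels
  have hτinc : ∀ n, ENNReal.ofReal ‖f (tp (n+1)) - f (tp n)‖ ≤ G (n+1) := by
    intro n
    rcases hτstep n with ⟨hl, hr⟩
    rcases eq_or_lt_of_le hl with heq | hlt
    · have : tp (n+1) = tp n := by
        rw [htp]; simp only
        rw [← heq]
        push_cast
        rw [hpowR n]
        field_simp
      rw [this]
      simp
    · have heq : τ (n+1) = 2 * τ n + 1 := by omega
      have key := hG (n+1) (2 * τ n) (by have := hτ0 n; omega)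
        (by linarith [hτle (n+1), heq.ge, heq.le])
      have e1 : ((2 * τ n : ℤ) : ℝ) / 2 ^ (n+1) = tp n := by
        rw [htp]; simp only; push_cast; rw [hpowR n]; field_simp
      have e2 : (((2 * τ n : ℤ) : ℝ) + 1) / 2 ^ (n+1) = tp (n+1) := by
        rw [htp]; simp only [heq]; push_cast; ring_nf
      rwa [e1, e2] at key
  have hσinc : ∀ n, ENNReal.ofReal ‖f (sp n) - f (sp (n+1))‖ ≤ G (n+1) := by
    intro n
    rcases hσstep n with ⟨hl, hr⟩
    rcases eq_or_lt_of_le hl with heq | hlt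
    · have : sp (n+1) = sp n := by
        rw [hsp]; simp only
        rw [heq]
        push_cast
        rw [hpowR n]
        field_simp
      rw [this]
      simp
    · have heq : 2 * σ n = σ (n+1) + 1 := by omega
      have hup : σ (n+1) + 1 ≤ 2 ^ (n+1) := by
        have hp : (2:ℤ) ^ (n+1) = 2 * 2 ^ n := by ring
        linarith [hσle n, heq.le, heq.ge]
      have key := hG (n+1) (σ (n+1)) (hσ0 (n+1)) hup
      have e1 : ((σ (n+1) : ℤ) : ℝ) / 2 ^ (n+1) = sp (n+1) := by rw [hsp]
      have e2 : (((σ (n+1) : ℤ) : ℝ) + 1) / 2 ^ (n+1) = sp n := by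
        rw [hsp]; simp only
        have hcast : ((σ (n+1) : ℝ) + 1) = 2 * (σ n : ℝ) := by
          exact_mod_cast congrArg (fun z : ℤ => (z : ℝ)) heq.symm
        rw [hcast, hpowR n]
        rw [mul_div_mul_left _ _ (two_ne_zero)]
      rwa [e1, e2] at key
  -- main induction
  have main : ∀ j : ℕ, ENNReal.ofReal ‖f (tp (n₀ + j)) - f (sp (n₀ + j))‖
      ≤ ∑ i ∈ Finset.range (j + 1), 2 * G (n₀ + i) := by
    intro j
    induction j with
    | zero =>
        rcases hbase with ⟨hl, hr⟩
        have hsum : ∑ i ∈ Finset.range (0 + 1), 2 * G (n₀ + i) = 2 * G n₀ := by simp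
        rw [hsum]
        rcases eq_or_lt_of_le hl with heq | hlt
        · have : tp n₀ = sp n₀ := by
            rw [htp, hsp]; simp only; rw [← heq]
          simp only [Nat.add_zero]
          rw [this]
          simp
        · have heq : τ n₀ = σ n₀ + 1 := by omega
          have key := hG n₀ (σ n₀) (hσ0 n₀) (by linarith [hτle n₀, heq.le, heq.ge])
          have e1 : ((σ n₀ : ℤ) : ℝ) / 2 ^ n₀ = sp n₀ := by rw [hsp]
          have e2 : (((σ n₀ : ℤ) : ℝ) + 1) / 2 ^ n₀ = tp n₀ := by
            rw [htp]; simp only [heq]; push_cast; ring_nf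
          rw [e1, e2] at key
          simp only [Nat.add_zero]
          calc ENNReal.ofReal ‖f (tp n₀) - f (sp n₀)‖ ≤ G n₀ := key
            _ ≤ 2 * G n₀ := by
                nth_rewrite 1 [← one_mul (G n₀)]
                exact mul_le_mul_left (by norm_num) _
    | succ j ih =>
        have eidx : n₀ + (j + 1) = n₀ + j + 1 := rfl
        rw [eidx]
        have tri : ‖f (tp (n₀ + j + 1)) - f (sp (n₀ + j + 1))‖
            ≤ ‖f (tp (n₀ + j + 1)) - f (tp (n₀ + j))‖
              + ‖f (tp (n₀ + j)) - f (sp (n₀ + j))‖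
              + ‖f (sp (n₀ + j)) - f (sp (n₀ + j + 1))‖ := by
          calc ‖f (tp (n₀ + j + 1)) - f (sp (n₀ + j + 1))‖
              ≤ ‖f (tp (n₀ + j + 1)) - f (tp (n₀ + j))‖
                + ‖f (tp (n₀ + j)) - f (sp (n₀ + j + 1))‖ :=
                norm_sub_le_norm_sub_add_norm_sub _ _ _
            _ ≤ _ := by
                have := norm_sub_le_norm_sub_add_norm_sub (f (tp (n₀ + j))) (f (sp (n₀ + j)))
                  (f (sp (n₀ + j + 1)))
                linarith
        calc ENNReal.ofReal ‖f (tp (n₀ + j + 1)) - f (sp (n₀ + j + 1))‖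
            ≤ ENNReal.ofReal (‖f (tp (n₀ + j + 1)) - f (tp (n₀ + j))‖
              + ‖f (tp (n₀ + j)) - f (sp (n₀ + j))‖
              + ‖f (sp (n₀ + j)) - f (sp (n₀ + j + 1))‖) := ENNReal.ofReal_le_ofReal tri
          _ ≤ ENNReal.ofReal (‖f (tp (n₀ + j + 1)) - f (tp (n₀ + j))‖
              + ‖f (tp (n₀ + j)) - f (sp (n₀ + j))‖)
              + ENNReal.ofReal ‖f (sp (n₀ + j)) - f (sp (n₀ + j + 1))‖ := ENNReal.ofReal_add_le
          _ ≤ ENNReal.ofReal ‖f (tp (n₀ + j + 1)) - f (tp (n₀ + j))‖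
              + ENNReal.ofReal ‖f (tp (n₀ + j)) - f (sp (n₀ + j))‖
              + ENNReal.ofReal ‖f (sp (n₀ + j)) - f (sp (n₀ + j + 1))‖ :=
              add_le_add_left ENNReal.ofReal_add_le _
          _ ≤ G (n₀ + j + 1) + (∑ i ∈ Finset.range (j + 1), 2 * G (n₀ + i)) + G (n₀ + j + 1) := by
              gcongr
              · exact hτinc (n₀ + j)
              · exact hσinc (n₀ + j)
          _ = (∑ i ∈ Finset.range (j + 1), 2 * G (n₀ + i)) + 2 * G (n₀ + (j + 1)) := by
              rw [eidx, two_mul]; ring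
          _ = ∑ i ∈ Finset.range (j + 1 + 1), 2 * G (n₀ + i) :=
              (Finset.sum_range_succ _ _).symm
  -- membership and limits
  have hsp_mem : ∀ j, sp (n₀ + j) ∈ Set.Icc (0:ℝ) 1 := by
    intro j
    constructor
    · exact div_nonneg (by exact_mod_cast hσ0 (n₀+j)) (pow_pos (n₀+j)).le
    · rw [hsp]; simp only
      rw [div_le_one (pow_pos (n₀+j))]
      exact_mod_cast hσle (n₀+j)
  have htp_mem : ∀ j, tp (n₀ + j) ∈ Set.Icc (0:ℝ) 1 := by
    intro j
    constructor
    · exact div_nonneg (by exact_mod_cast hτ0 (n₀+j)) (pow_pos (n₀+j)).le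
    · rw [htp]; simp only
      rw [div_le_one (pow_pos (n₀+j))]
      exact_mod_cast hτle (n₀+j)
  have hcancel' : ∀ n : ℕ, ((2:ℝ) ^ n)⁻¹ * 2 ^ n = 1 := fun n => by
    field_simp
  have hsp_bound : ∀ n, s ≤ sp n ∧ sp n < s + ((2:ℝ)^n)⁻¹ := by
    intro n
    constructor
    · rw [hsp]; simp only
      rw [le_div_iff₀ (pow_pos n)]
      exact hceil_le n
    · rw [hsp]; simp only
      rw [div_lt_iff₀ (pow_pos n)]
      nlinarith [hceil_lt n, hcancel' n, pow_pos n]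
  have htp_bound : ∀ n, t - ((2:ℝ)^n)⁻¹ < tp n ∧ tp n ≤ t := by
    intro n
    constructor
    · rw [htp]; simp only
      rw [lt_div_iff₀ (pow_pos n)]
      nlinarith [hfloor_lt n, hcancel' n, pow_pos n]
    · rw [htp]; simp only
      rw [div_le_iff₀ (pow_pos n)]
      exact hfloor_le n
  have hinv : Tendsto (fun j : ℕ => ((2:ℝ)^(n₀+j))⁻¹) atTop (nhds 0) := by
    have hhalf : Tendsto (fun j : ℕ => ((2:ℝ)⁻¹)^j) atTop (nhds 0) :=
      tendsto_pow_atTop_nhds_zero_of_lt_one (by norm_num) (by norm_num)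
    refine squeeze_zero (fun j => by positivity) (fun j => ?_) hhalf
    rw [← inv_pow]
    exact pow_le_pow_of_le_one (by norm_num) (by norm_num) (Nat.le_add_left j n₀)
  have hupper : Tendsto (fun j : ℕ => s + ((2:ℝ)^(n₀+j))⁻¹) atTop (nhds s) := by
    simpa using tendsto_const_nhds.add hinv
  have hlower : Tendsto (fun j : ℕ => t - ((2:ℝ)^(n₀+j))⁻¹) atTop (nhds t) := by
    simpa using tendsto_const_nhds.sub hinv
  have hsp_tendsto : Tendsto (fun j => sp (n₀ + j)) atTop (nhds s) :=
    tendsto_of_tendsto_of_tendsto_of_le_of_le tendsto_const_nhds hupper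
      (fun j => (hsp_bound (n₀ + j)).1) (fun j => (hsp_bound (n₀ + j)).2.le)
  have htp_tendsto : Tendsto (fun j => tp (n₀ + j)) atTop (nhds t) :=
    tendsto_of_tendsto_of_tendsto_of_le_of_le hlower tendsto_const_nhds
      (fun j => (htp_bound (n₀ + j)).1.le) (fun j => (htp_bound (n₀ + j)).2)
  have hfs : Tendsto (fun j => f (sp (n₀ + j))) atTop (nhds (f s)) := by
    refine ((hf s ⟨hs, hs1⟩).tendsto).comp ?_
    exact tendsto_nhdsWithin_of_tendsto_nhds_of_eventually_within _ hsp_tendsto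
      (Eventually.of_forall hsp_mem)
  have hft : Tendsto (fun j => f (tp (n₀ + j))) atTop (nhds (f t)) := by
    refine ((hf t ⟨ht0.le, ht⟩).tendsto).comp ?_
    exact tendsto_nhdsWithin_of_tendsto_nhds_of_eventually_within _ htp_tendsto
      (Eventually.of_forall htp_mem)
  have hnorm : Tendsto
      (fun j => ENNReal.ofReal ‖f (tp (n₀ + j)) - f (sp (n₀ + j))‖) atTop
      (nhds (ENNReal.ofReal ‖f t - f s‖)) :=
    (ENNReal.continuous_ofReal.tendsto _).comp ((hft.sub hfs).norm)
  refine le_of_tendsto' hnorm fun j => ?_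
  exact (main j).trans (ENNReal.sum_le_tsum _)


lemma qk_exists_n0 {h : ℝ} (h0 : 0 < h) (h1 : h ≤ 1) :
    ∃ n₀ : ℕ, ((2:ℝ) ^ n₀)⁻¹ ≤ h ∧ h < 2 * ((2:ℝ) ^ n₀)⁻¹ := by
  have hex : ∃ n : ℕ, ((2:ℝ) ^ n)⁻¹ ≤ h := by
    obtain ⟨n, hn⟩ := exists_pow_lt_of_lt_one h0 (by norm_num : (1:ℝ) / 2 < 1)
    refine ⟨n, le_of_lt ?_⟩
    rw [div_pow, one_pow, one_div] at hn
    exact hn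
  classical
  refine ⟨Nat.find hex, Nat.find_spec hex, ?_⟩
  rcases Nat.eq_zero_or_pos (Nat.find hex) with h0' | hpos
  · rw [h0']
    norm_num
    linarith
  · obtain ⟨k, hk⟩ := Nat.exists_eq_add_of_lt hpos
    have hk' : Nat.find hex = k + 1 := by omega
    have hmin := Nat.find_min hex (m := k) (by omega)
    push_neg at hmin
    rw [hk']
    have : (2:ℝ) ^ (k+1) = 2 * 2 ^ k := by ring
    rw [this, mul_inv, ← mul_assoc]
    calc h < ((2:ℝ) ^ k)⁻¹ := hmin
      _ = 2 * 2⁻¹ * ((2:ℝ) ^ k)⁻¹ := by norm_num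

noncomputable section

/-- **Quantitative Kolmogorov continuity theorem** (Lemma 2.8). For a continuous
Banach-space-valued process on `[0,1]` satisfying the moment bound
`E[(‖X(t)-X(s)‖/|t-s|^{β+1/q})^q]^{1/q} ≤ A`, the Hölder-type quantity
`E[sup_{0 ≤ s < t ≤ 1} (‖X(t)-X(s)‖/|t-s|^α)^q]^{1/q}` is bounded by `C(α,β)·A`,
with a constant depending only on `α` and `β` (in particular uniform in `q`). -/
theorem quantitative_kolmogorov {E : Type*} [NormedAddCommGroup E] [NormedSpace ℝ E]
    [CompleteSpace E] (α β : ℝ) (hα : 0 < α) (hαβ : α < β) (hβ : β < 1) :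
    ∃ C : ℝ, 0 < C ∧
      ∀ {Ω : Type} [MeasurableSpace Ω] (P : Measure Ω), IsProbabilityMeasure P →
        ∀ (q : ℝ), 1 ≤ q → β + 1 / q ≤ 1 →
          ∀ (X : ℝ → Ω → E) (A : ℝ), 0 < A →
            (∀ t ∈ Set.Icc (0 : ℝ) 1, AEStronglyMeasurable (X t) P) →
            (∀ᵐ ω ∂P, ContinuousOn (fun t => X t ω) (Set.Icc (0 : ℝ) 1)) →
            (∀ s t : ℝ, 0 ≤ s → s < t → t ≤ 1 →
              (∫⁻ ω, ENNReal.ofReal ((‖X t ω - X s ω‖ / |t - s| ^ (β + 1 / q)) ^ q) ∂P) ^ (1 / q)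
                ≤ ENNReal.ofReal A) →
            (∫⁻ ω, (⨆ (s : ℝ) (t : ℝ) (_ : 0 ≤ s) (_ : s < t) (_ : t ≤ 1),
                ENNReal.ofReal ((‖X t ω - X s ω‖ / |t - s| ^ α) ^ q)) ∂P) ^ (1 / q)
              ≤ ENNReal.ofReal (C * A) := by
  set r : ℝ := (2:ℝ) ^ (α - β) with hr
  have hr0 : 0 < r := Real.rpow_pos_of_pos (by norm_num) _
  have hr1 : r < 1 := Real.rpow_lt_one_of_one_lt_of_neg (by norm_num) (by linarith)
  have hr1' : 0 < 1 - r := by linarith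
  refine ⟨2 * (1 - r)⁻¹, by positivity, ?_⟩
  intro Ω _ P hP q hq1 hβq X A hA hmeas hcont hmom
  have hq0 : (0:ℝ) < q := lt_of_lt_of_le one_pos hq1
  have hq0' : (0:ℝ) < 1/q := by positivity
  set b : ℝ := β + 1 / q with hb
  have hβ0 : 0 < β := lt_trans hα hαβ
  have hb0 : 0 < b := by positivity
  -- dyadic points are in [0,1]
  have hmem : ∀ m k : ℕ, k ≤ 2 ^ m → ((k:ℝ) / 2 ^ m) ∈ Set.Icc (0:ℝ) 1 := by
    intro m k hk
    have hp : (0:ℝ) < 2 ^ m := by positivity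
    constructor
    · positivity
    · rw [div_le_one hp]
      exact_mod_cast hk
  -- the dyadic sum process
  set D : ℕ → Ω → ℝ≥0∞ := fun m ω => ∑ k ∈ Finset.range (2 ^ m),
    (ENNReal.ofReal ‖X (((k:ℝ) + 1) / 2 ^ m) ω - X ((k:ℝ) / 2 ^ m) ω‖) ^ q with hD
  set c : ℕ → ℝ≥0∞ := fun m => ENNReal.ofReal (((2:ℝ) ^ m) ^ α) with hc
  have hcfin : ∀ m, c m ≠ ∞ := fun m => ENNReal.ofReal_ne_top
  set g : ℕ → Ω → ℝ≥0∞ := fun m ω => c m * (D m ω) ^ (1/q) with hg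
  -- measurability
  have htermmeas : ∀ m (k : ℕ), k + 1 ≤ 2 ^ m → AEMeasurable
      (fun ω => (ENNReal.ofReal ‖X (((k:ℝ) + 1) / 2 ^ m) ω - X ((k:ℝ) / 2 ^ m) ω‖) ^ q) P := by
    intro m k hk'
    have h1 := hmeas (((k:ℝ) + 1) / 2 ^ m) (by
      have := hmem m (k+1) hk'
      push_cast at this ⊢
      exact this)
    have h2 := hmeas ((k:ℝ) / 2 ^ m) (hmem m k (le_of_lt (Nat.lt_of_succ_le hk')))
    exact (((h1.sub h2).norm.aemeasurable).ennreal_ofReal).pow_const q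
  have hDmeas : ∀ m, AEMeasurable (D m) P := by
    intro m
    refine Finset.aemeasurable_fun_sum _ fun k hk => ?_
    exact htermmeas m k (Finset.mem_range.1 hk)
  have hgmeas : ∀ m, AEMeasurable (g m) P := fun m =>
    (aemeasurable_const.mul ((hDmeas m).pow_const (1/q)))
  -- moment bound on D
  have hDbound : ∀ m, (∫⁻ ω, D m ω ∂P)
      ≤ (2 ^ m : ℝ≥0∞) * (ENNReal.ofReal A * ENNReal.ofReal ((((2:ℝ) ^ m)⁻¹) ^ b)) ^ q := by
    intro m
    have hp : (0:ℝ) < 2 ^ m := by positivity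
    have hhb : (0:ℝ) < (((2:ℝ) ^ m)⁻¹) ^ b := Real.rpow_pos_of_pos (by positivity) _
    have hterm : ∀ k : ℕ, k + 1 ≤ 2 ^ m →
        (∫⁻ ω, (ENNReal.ofReal ‖X (((k:ℝ) + 1) / 2 ^ m) ω - X ((k:ℝ) / 2 ^ m) ω‖) ^ q ∂P)
          ≤ (ENNReal.ofReal A * ENNReal.ofReal ((((2:ℝ) ^ m)⁻¹) ^ b)) ^ q := by
      intro k hk
      have hs0 : (0:ℝ) ≤ (k:ℝ) / 2 ^ m := by positivity
      have hslt : (k:ℝ) / 2 ^ m < ((k:ℝ) + 1) / 2 ^ m := by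
        rw [div_lt_div_iff₀ hp hp]
        nlinarith [hp]
      have ht1 : ((k:ℝ) + 1) / 2 ^ m ≤ 1 := by
        rw [div_le_one hp]
        exact_mod_cast hk
      have hmom' := hmom ((k:ℝ)/2^m) (((k:ℝ)+1)/2^m) hs0 hslt ht1
      have habs : |((k:ℝ) + 1) / 2 ^ m - (k:ℝ) / 2 ^ m| = ((2:ℝ) ^ m)⁻¹ := by
        rw [div_sub_div_same]
        have hnum : ((k:ℝ) + 1 - k) = 1 := by ring
        rw [hnum, abs_of_pos (by positivity)]
        norm_num
      rw [habs] at hmom'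
      have hmomq := ENNReal.rpow_le_rpow hmom' hq0.le
      rw [← ENNReal.rpow_mul, one_div, inv_mul_cancel₀ hq0.ne', ENNReal.rpow_one] at hmomq
      have hpt : (fun ω => ENNReal.ofReal
            ((‖X (((k:ℝ)+1)/2^m) ω - X ((k:ℝ)/2^m) ω‖ / (((2:ℝ)^m)⁻¹) ^ b) ^ q))
          = fun ω => (ENNReal.ofReal ‖X (((k:ℝ)+1)/2^m) ω - X ((k:ℝ)/2^m) ω‖) ^ q
            * ((ENNReal.ofReal ((((2:ℝ)^m)⁻¹) ^ b)) ^ q)⁻¹ := by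
        funext ω
        calc ENNReal.ofReal
              ((‖X (((k:ℝ)+1)/2^m) ω - X ((k:ℝ)/2^m) ω‖ / (((2:ℝ)^m)⁻¹) ^ b) ^ q)
            = (ENNReal.ofReal
              (‖X (((k:ℝ)+1)/2^m) ω - X ((k:ℝ)/2^m) ω‖ / (((2:ℝ)^m)⁻¹) ^ b)) ^ q :=
              (ENNReal.ofReal_rpow_of_nonneg (by positivity) hq0.le).symm
          _ = (ENNReal.ofReal ‖X (((k:ℝ)+1)/2^m) ω - X ((k:ℝ)/2^m) ω‖
              / ENNReal.ofReal ((((2:ℝ)^m)⁻¹) ^ b)) ^ q := by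
              rw [ENNReal.ofReal_div_of_pos hhb]
          _ = (ENNReal.ofReal ‖X (((k:ℝ)+1)/2^m) ω - X ((k:ℝ)/2^m) ω‖) ^ q
              / (ENNReal.ofReal ((((2:ℝ)^m)⁻¹) ^ b)) ^ q :=
              ENNReal.div_rpow_of_nonneg _ _ hq0.le
          _ = (ENNReal.ofReal ‖X (((k:ℝ)+1)/2^m) ω - X ((k:ℝ)/2^m) ω‖) ^ q
              * ((ENNReal.ofReal ((((2:ℝ)^m)⁻¹) ^ b)) ^ q)⁻¹ := div_eq_mul_inv _ _
      rw [hpt] at hmomq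
      set K := (ENNReal.ofReal ((((2:ℝ)^m)⁻¹) ^ b)) ^ q with hK
      have hK0 : K ≠ 0 := (ENNReal.rpow_pos (ENNReal.ofReal_pos.2 hhb) ENNReal.ofReal_ne_top).ne'
      have hKT : K ≠ ∞ := ENNReal.rpow_ne_top_of_nonneg hq0.le ENNReal.ofReal_ne_top
      rw [lintegral_mul_const' K⁻¹ _ (ENNReal.inv_ne_top.2 hK0)] at hmomq
      have hfinal := mul_le_mul_left hmomq K
      rw [mul_assoc, ENNReal.inv_mul_cancel hK0 hKT, mul_one] at hfinal
      rw [ENNReal.mul_rpow_of_nonneg _ _ hq0.le]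
      exact hfinal
    calc (∫⁻ ω, D m ω ∂P)
        = ∑ k ∈ Finset.range (2^m), ∫⁻ ω,
            (ENNReal.ofReal ‖X (((k:ℝ) + 1) / 2 ^ m) ω - X ((k:ℝ) / 2 ^ m) ω‖) ^ q ∂P := by
          rw [hD]
          exact lintegral_finset_sum' _ fun k hk => htermmeas m k (Finset.mem_range.1 hk)
      _ ≤ ∑ _k ∈ Finset.range (2^m),
            (ENNReal.ofReal A * ENNReal.ofReal ((((2:ℝ) ^ m)⁻¹) ^ b)) ^ q :=
          Finset.sum_le_sum fun k hk => hterm k (Finset.mem_range.1 hk)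
      _ = (2 ^ m : ℝ≥0∞) * (ENNReal.ofReal A * ENNReal.ofReal ((((2:ℝ) ^ m)⁻¹) ^ b)) ^ q := by
          rw [Finset.sum_const, Finset.card_range, nsmul_eq_mul]
          norm_num
  -- the L^q bound for each g m
  have h2ne0 : (2:ℝ≥0∞) ≠ 0 := by norm_num
  have h2netop : (2:ℝ≥0∞) ≠ ⊤ := by norm_num
  have hofm : ∀ m : ℕ, ENNReal.ofReal ((2:ℝ) ^ m) = (2:ℝ≥0∞) ^ (m:ℝ) := by
    intro m
    rw [ENNReal.ofReal_pow (by norm_num), ENNReal.ofReal_ofNat, ENNReal.rpow_natCast]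
  have hgbound : ∀ m, (∫⁻ ω, (g m ω) ^ q ∂P) ^ (1/q)
      ≤ ENNReal.ofReal A * (ENNReal.ofReal r) ^ m := by
    intro m
    have hp : (0:ℝ) < 2 ^ m := by positivity
    have hDq : (fun ω => (g m ω) ^ q) = fun ω => (c m) ^ q * D m ω := by
      funext ω
      rw [hg]
      simp only
      rw [ENNReal.mul_rpow_of_nonneg _ _ hq0.le, ← ENNReal.rpow_mul,
        one_div, inv_mul_cancel₀ hq0.ne', ENNReal.rpow_one]
    rw [hDq, lintegral_const_mul' _ _ (ENNReal.rpow_ne_top_of_nonneg hq0.le (hcfin m)),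
      ENNReal.mul_rpow_of_nonneg _ _ hq0'.le, ← ENNReal.rpow_mul,
      mul_one_div_cancel hq0.ne', ENNReal.rpow_one]
    calc c m * (∫⁻ ω, D m ω ∂P) ^ (1/q)
        ≤ c m * ((2 ^ m : ℝ≥0∞)
            * (ENNReal.ofReal A * ENNReal.ofReal ((((2:ℝ)^m)⁻¹) ^ b)) ^ q) ^ (1/q) := by
          gcongr
          exact hDbound m
      _ = ENNReal.ofReal A
          * (c m * (2 ^ m : ℝ≥0∞) ^ ((1:ℝ)/q) * ENNReal.ofReal ((((2:ℝ)^m)⁻¹) ^ b)) := by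
          rw [ENNReal.mul_rpow_of_nonneg _ _ hq0'.le, ← ENNReal.rpow_mul,
            mul_one_div_cancel hq0.ne', ENNReal.rpow_one]
          ring
      _ = ENNReal.ofReal A * (ENNReal.ofReal r) ^ m := by
          congr 1
          have e1 : c m = (2:ℝ≥0∞) ^ ((m:ℝ) * α) := by
            rw [hc]
            simp only
            rw [← ENNReal.ofReal_rpow_of_pos hp, hofm m, ← ENNReal.rpow_mul]
          have e2 : (2 ^ m : ℝ≥0∞) ^ ((1:ℝ)/q) = (2:ℝ≥0∞) ^ ((m:ℝ) * (1/q)) := by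
            rw [← ENNReal.rpow_natCast (2:ℝ≥0∞) m, ← ENNReal.rpow_mul]
          have e3 : ENNReal.ofReal ((((2:ℝ)^m)⁻¹) ^ b) = (2:ℝ≥0∞) ^ (-((m:ℝ) * b)) := by
            rw [← ENNReal.ofReal_rpow_of_pos (by positivity),
              ENNReal.ofReal_inv_of_pos hp, hofm m, ← ENNReal.rpow_neg, ← ENNReal.rpow_mul]
            ring_nf
          have e4 : ENNReal.ofReal r = (2:ℝ≥0∞) ^ (α - β) := by
            rw [hr, ← ENNReal.ofReal_rpow_of_pos (by norm_num : (0:ℝ) < 2), ENNReal.ofReal_ofNat]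
          rw [e1, e2, e3, e4, ← ENNReal.rpow_natCast ((2:ℝ≥0∞) ^ (α - β)) m,
            ← ENNReal.rpow_mul, ← ENNReal.rpow_add _ _ h2ne0 h2netop,
            ← ENNReal.rpow_add _ _ h2ne0 h2netop]
          congr 1
          rw [hb]
          ring
  -- pathwise bound on the supremum
  have hsup : ∀ᵐ ω ∂P, (⨆ (s : ℝ) (t : ℝ) (_ : 0 ≤ s) (_ : s < t) (_ : t ≤ 1),
      ENNReal.ofReal ((‖X t ω - X s ω‖ / |t - s| ^ α) ^ q))
      ≤ ((2:ℝ≥0∞) * ∑' m, g m ω) ^ q := by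
    filter_upwards [hcont] with ω hω
    refine iSup_le fun s => iSup_le fun t => iSup_le fun hs => iSup_le fun hst =>
      iSup_le fun ht => ?_
    have hts0 : 0 < t - s := by linarith
    have hts1 : t - s ≤ 1 := by linarith
    obtain ⟨n₀, hn1, hn2⟩ := qk_exists_n0 hts0 hts1
    -- the增量 bound hypothesis for the chain lemma
    have hG : ∀ m : ℕ, ∀ a : ℤ, 0 ≤ a → a + 1 ≤ 2 ^ m →
        ENNReal.ofReal ‖X (((a : ℝ) + 1) / 2 ^ m) ω - X ((a : ℝ) / 2 ^ m) ω‖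
          ≤ (D m ω) ^ ((1:ℝ)/q) := by
      intro m a ha0 ha1
      set k := a.toNat with hk
      have hak : (a : ℝ) = (k : ℝ) := by
        rw [hk]
        exact_mod_cast (Int.toNat_of_nonneg ha0).symm
      have hkmem : k ∈ Finset.range (2 ^ m) := by
        refine Finset.mem_range.2 ?_
        have : (k : ℤ) + 1 ≤ 2 ^ m := by rwa [hk, Int.toNat_of_nonneg ha0]
        exact_mod_cast (by push_cast at this ⊢; omega : (k:ℤ) < 2 ^ m)
      have hsingle : (ENNReal.ofReal ‖X (((k:ℝ) + 1) / 2 ^ m) ω - X ((k:ℝ) / 2 ^ m) ω‖) ^ q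
          ≤ D m ω := by
        rw [hD]
        exact Finset.single_le_sum (f := fun i : ℕ =>
          (ENNReal.ofReal ‖X (((i:ℝ) + 1) / 2 ^ m) ω - X ((i:ℝ) / 2 ^ m) ω‖) ^ q)
          (fun i _ => zero_le) hkmem
      have := ENNReal.rpow_le_rpow hsingle hq0'.le
      rw [← ENNReal.rpow_mul, mul_one_div_cancel hq0.ne', ENNReal.rpow_one] at this
      rw [hak]
      exact this
    have hchain := qk_chain hω hs hst ht (fun m => (D m ω) ^ ((1:ℝ)/q)) hG hn1 hn2
    -- now bound the ratio
    have habs : |t - s| = t - s := abs_of_pos hts0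
    have hta : (0:ℝ) < (t - s) ^ α := Real.rpow_pos_of_pos hts0 _
    have hration : ENNReal.ofReal (‖X t ω - X s ω‖ / |t - s| ^ α)
        ≤ (2:ℝ≥0∞) * ∑' m, g m ω := by
      rw [habs, ENNReal.ofReal_div_of_pos hta, div_eq_mul_inv]
      have hinvle : (ENNReal.ofReal ((t - s) ^ α))⁻¹
          ≤ ENNReal.ofReal (((2:ℝ) ^ n₀) ^ α) := by
        have h1 : (((2:ℝ) ^ n₀) ^ α)⁻¹ ≤ (t - s) ^ α := by
          rw [← Real.inv_rpow (by positivity)]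
          exact Real.rpow_le_rpow (by positivity) hn1 hα.le
        calc (ENNReal.ofReal ((t - s) ^ α))⁻¹
            ≤ (ENNReal.ofReal ((((2:ℝ) ^ n₀) ^ α)⁻¹))⁻¹ :=
              ENNReal.inv_le_inv' (ENNReal.ofReal_le_ofReal h1)
          _ = ENNReal.ofReal (((2:ℝ) ^ n₀) ^ α) := by
              rw [ENNReal.ofReal_inv_of_pos (Real.rpow_pos_of_pos (by positivity) _), inv_inv]
      calc ENNReal.ofReal ‖X t ω - X s ω‖ * (ENNReal.ofReal ((t - s) ^ α))⁻¹
          ≤ (∑' i : ℕ, 2 * (D (n₀ + i) ω) ^ ((1:ℝ)/q))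
              * ENNReal.ofReal (((2:ℝ) ^ n₀) ^ α) := by
            exact mul_le_mul' hchain hinvle
        _ = ∑' i : ℕ, 2 * (D (n₀ + i) ω) ^ ((1:ℝ)/q) * ENNReal.ofReal (((2:ℝ) ^ n₀) ^ α) :=
            ENNReal.tsum_mul_right.symm
        _ ≤ ∑' i : ℕ, 2 * g (n₀ + i) ω := by
            refine ENNReal.tsum_le_tsum fun i => ?_
            rw [hg]
            simp only
            have hcle : ENNReal.ofReal (((2:ℝ) ^ n₀) ^ α) ≤ c (n₀ + i) := by
              rw [hc]
              refine ENNReal.ofReal_le_ofReal ?_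
              refine Real.rpow_le_rpow (by positivity) ?_ hα.le
              exact pow_le_pow_right₀ (by norm_num) (Nat.le_add_right _ _)
            calc 2 * (D (n₀ + i) ω) ^ ((1:ℝ)/q) * ENNReal.ofReal (((2:ℝ) ^ n₀) ^ α)
                ≤ 2 * (D (n₀ + i) ω) ^ ((1:ℝ)/q) * c (n₀ + i) := by gcongr
              _ = 2 * (c (n₀ + i) * (D (n₀ + i) ω) ^ ((1:ℝ)/q)) := by ring
        _ = 2 * ∑' i : ℕ, g (n₀ + i) ω := ENNReal.tsum_mul_left
        _ ≤ 2 * ∑' m : ℕ, g m ω :=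
            mul_le_mul_right
              (tsum_comp_le_tsum_of_injective (add_right_injective n₀) (fun m => g m ω)) 2
    have : ENNReal.ofReal ((‖X t ω - X s ω‖ / |t - s| ^ α) ^ q)
        = (ENNReal.ofReal (‖X t ω - X s ω‖ / |t - s| ^ α)) ^ q :=
      (ENNReal.ofReal_rpow_of_nonneg (by positivity) hq0.le).symm
    rw [this]
    exact ENNReal.rpow_le_rpow hration hq0.le
  -- final assembly
  have hW : (∫⁻ ω, (⨆ (s : ℝ) (t : ℝ) (_ : 0 ≤ s) (_ : s < t) (_ : t ≤ 1),
      ENNReal.ofReal ((‖X t ω - X s ω‖ / |t - s| ^ α) ^ q)) ∂P)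
      ≤ ∫⁻ ω, ((2:ℝ≥0∞) * ∑' m, g m ω) ^ q ∂P := lintegral_mono_ae hsup
  have step1 : (∫⁻ ω, ((2:ℝ≥0∞) * ∑' m, g m ω) ^ q ∂P) ^ ((1:ℝ)/q)
      ≤ 2 * ∑' m, (∫⁻ ω, (g m ω) ^ q ∂P) ^ ((1:ℝ)/q) := by
    have e : (fun ω => ((2:ℝ≥0∞) * ∑' m, g m ω) ^ q)
        = fun ω => (2:ℝ≥0∞) ^ q * (∑' m, g m ω) ^ q := by
      funext ω
      rw [ENNReal.mul_rpow_of_nonneg _ _ hq0.le]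
    rw [e, lintegral_const_mul' _ _ (ENNReal.rpow_ne_top_of_nonneg hq0.le h2netop),
      ENNReal.mul_rpow_of_nonneg _ _ hq0'.le, ← ENNReal.rpow_mul,
      mul_one_div_cancel hq0.ne', ENNReal.rpow_one]
    exact mul_le_mul_right (qk_minkowski P g hgmeas hq1) 2
  have step2 : ∑' m, (∫⁻ ω, (g m ω) ^ q ∂P) ^ ((1:ℝ)/q)
      ≤ ENNReal.ofReal A * (1 - ENNReal.ofReal r)⁻¹ := by
    calc ∑' m, (∫⁻ ω, (g m ω) ^ q ∂P) ^ ((1:ℝ)/q)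
        ≤ ∑' m, ENNReal.ofReal A * (ENNReal.ofReal r) ^ m :=
          ENNReal.tsum_le_tsum fun m => hgbound m
      _ = ENNReal.ofReal A * ∑' m, (ENNReal.ofReal r) ^ m := ENNReal.tsum_mul_left
      _ = ENNReal.ofReal A * (1 - ENNReal.ofReal r)⁻¹ := by
          rw [ENNReal.tsum_geometric]
  calc (∫⁻ ω, (⨆ (s : ℝ) (t : ℝ) (_ : 0 ≤ s) (_ : s < t) (_ : t ≤ 1),
      ENNReal.ofReal ((‖X t ω - X s ω‖ / |t - s| ^ α) ^ q)) ∂P) ^ (1/q)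
      ≤ (∫⁻ ω, ((2:ℝ≥0∞) * ∑' m, g m ω) ^ q ∂P) ^ ((1:ℝ)/q) :=
        ENNReal.rpow_le_rpow hW hq0'.le
    _ ≤ 2 * ∑' m, (∫⁻ ω, (g m ω) ^ q ∂P) ^ ((1:ℝ)/q) := step1
    _ ≤ 2 * (ENNReal.ofReal A * (1 - ENNReal.ofReal r)⁻¹) := mul_le_mul_right step2 2
    _ = ENNReal.ofReal (2 * (1 - r)⁻¹ * A) := by
        rw [ENNReal.ofReal_mul (by positivity), ENNReal.ofReal_mul (by norm_num),
          ENNReal.ofReal_inv_of_pos (by linarith), ENNReal.ofReal_sub _ hr0.le,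
          ENNReal.ofReal_one, ENNReal.ofReal_ofNat]
        ring
end
end

section
/- Heat semigroup bound in exponentially weighted spaces (Lemma 3.10). Let θ > 0 and t > 0. For a continuous function φ : ℝ → ℂ with ‖φ‖_{CE^θ} := sup_{x∈ℝ} e^{-θ|x|} |φ(x)| < ∞, define (e^{tΔ}φ)(x) := ∫_ℝ (4πt)^{-1/2} exp( -(x-y)²/(4t) ) φ(y) dy. Then this integral converges absolutely for every x ∈ ℝ, and ‖e^{tΔ}φ‖_{CE^θ} ≤ 2 e^{θ² t} ‖φ‖_{CE^θ}. -/
open MeasureTheory Real ENNReal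

noncomputable section

/-- The exponentially weighted sup-norm `‖φ‖_{CE^θ} = sup_x e^{-θ|x|}|φ(x)|`, valued in `ℝ≥0∞`. -/
def CEnormE (θ : ℝ) (φ : ℝ → ℂ) : ℝ≥0∞ :=
  ⨆ x : ℝ, ENNReal.ofReal (Real.exp (-θ * |x|) * ‖φ x‖)

/-- The heat kernel `(4πt)^{-1/2} exp(-z²/(4t))`. -/
def heatKernel (t z : ℝ) : ℝ := (Real.sqrt (4 * Real.pi * t))⁻¹ * Real.exp (-z ^ 2 / (4 * t))

/-- The heat semigroup `e^{tΔ}φ(x) = ∫ (4πt)^{-1/2} exp(-(x-y)²/(4t)) φ(y) dy`. -/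
def heatOp (t : ℝ) (φ : ℝ → ℂ) (x : ℝ) : ℂ := ∫ y : ℝ, (heatKernel t (x - y) : ℂ) * φ y

lemma heatKernel_nonneg (t z : ℝ) : 0 ≤ heatKernel t z := by
  unfold heatKernel; positivity

lemma heatKernel_continuous (t : ℝ) (_ht : 0 < t) : Continuous (heatKernel t) := by
  unfold heatKernel
  fun_prop

lemma heatKernel_eq (t c : ℝ) (ht : 0 < t) (z : ℝ) :
    heatKernel t z * Real.exp (c * z) =
      (Real.sqrt (4 * Real.pi * t))⁻¹ * Real.exp (c ^ 2 * t) *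
        Real.exp (-(1 / (4 * t)) * (z - 2 * c * t) ^ 2) := by
  unfold heatKernel
  have h : -z ^ 2 / (4 * t) + c * z
      = c ^ 2 * t + -(1 / (4 * t)) * (z - 2 * c * t) ^ 2 := by
    field_simp
    ring
  rw [mul_assoc, ← Real.exp_add, h, Real.exp_add, ← mul_assoc]

lemma heatKernel_int (t c : ℝ) (ht : 0 < t) :
    Integrable (fun z => heatKernel t z * Real.exp (c * z)) ∧
      ∫ z, heatKernel t z * Real.exp (c * z) = Real.exp (c ^ 2 * t) := by
  have hb : 0 < 1 / (4 * t) := by positivity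
  have hI : Integrable (fun z : ℝ => Real.exp (-(1 / (4 * t)) * (z - 2 * c * t) ^ 2)) :=
    (integrable_exp_neg_mul_sq hb).comp_sub_right (2 * c * t)
  have hint : ∫ z : ℝ, Real.exp (-(1 / (4 * t)) * (z - 2 * c * t) ^ 2)
      = Real.sqrt (4 * Real.pi * t) := by
    rw [integral_sub_right_eq_self (fun z : ℝ => Real.exp (-(1 / (4 * t)) * z ^ 2)) (2 * c * t),
      integral_gaussian]
    congr 1
    field_simp
  have hs : Real.sqrt (4 * Real.pi * t) ≠ 0 := by positivity
  constructor
  · simp_rw [heatKernel_eq t c ht]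
    exact hI.const_mul _
  · simp_rw [heatKernel_eq t c ht]
    rw [MeasureTheory.integral_const_mul, hint]
    field_simp

/-- **Heat semigroup bound in exponentially weighted spaces** (Lemma 3.10). For `θ, t > 0`
and a continuous `φ` with finite `CE^θ`-norm, the defining integral of `e^{tΔ}φ` converges
absolutely at every point and `‖e^{tΔ}φ‖_{CE^θ} ≤ 2 e^{θ²t} ‖φ‖_{CE^θ}`. -/
theorem heat_semigroup_CE (θ t : ℝ) (hθ : 0 < θ) (ht : 0 < t)
    (φ : ℝ → ℂ) (hφ : Continuous φ) (hfin : CEnormE θ φ < ⊤) :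
    (∀ x : ℝ, Integrable (fun y => (heatKernel t (x - y) : ℂ) * φ y)) ∧
      CEnormE θ (heatOp t φ) ≤ ENNReal.ofReal (2 * Real.exp (θ ^ 2 * t)) * CEnormE θ φ := by
  set M := (CEnormE θ φ).toReal with hMdef
  have hM : 0 ≤ M := ENNReal.toReal_nonneg
  -- pointwise bound on φ
  have hbound : ∀ y : ℝ, ‖φ y‖ ≤ M * Real.exp (θ * |y|) := by
    intro y
    have h1 : ENNReal.ofReal (Real.exp (-θ * |y|) * ‖φ y‖) ≤ CEnormE θ φ :=
      le_iSup (fun x => ENNReal.ofReal (Real.exp (-θ * |x|) * ‖φ x‖)) y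
    have h2 : Real.exp (-θ * |y|) * ‖φ y‖ ≤ M :=
      (ENNReal.ofReal_le_iff_le_toReal hfin.ne).mp h1
    have h3 : Real.exp (θ * |y|) * (Real.exp (-θ * |y|) * ‖φ y‖) = ‖φ y‖ := by
      rw [← mul_assoc, ← Real.exp_add]
      ring_nf
      simp
    calc ‖φ y‖ = Real.exp (θ * |y|) * (Real.exp (-θ * |y|) * ‖φ y‖) := h3.symm
      _ ≤ Real.exp (θ * |y|) * M := by
          exact mul_le_mul_of_nonneg_left h2 (Real.exp_pos _).le
      _ = M * Real.exp (θ * |y|) := mul_comm _ _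
  -- the dominating function
  have hIp := heatKernel_int t θ ht
  have hIm := heatKernel_int t (-θ) ht
  set g : ℝ → ℝ := fun z => heatKernel t z * Real.exp (θ * z) + heatKernel t z * Real.exp (-θ * z)
    with hgdef
  have hgint : Integrable g := hIp.1.add hIm.1
  have hgval : ∫ z, g z = 2 * Real.exp (θ ^ 2 * t) := by
    rw [hgdef]
    rw [MeasureTheory.integral_add hIp.1 hIm.1, hIp.2, hIm.2]
    rw [neg_pow, neg_one_sq, one_mul]
    ring
  have hgnonneg : ∀ z, 0 ≤ g z := fun z =>
    add_nonneg (mul_nonneg (heatKernel_nonneg t z) (Real.exp_pos _).le)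
      (mul_nonneg (heatKernel_nonneg t z) (Real.exp_pos _).le)
  -- key pointwise bound for the integrand
  have hptwise : ∀ x y : ℝ, ‖(heatKernel t (x - y) : ℂ) * φ y‖
      ≤ M * Real.exp (θ * |x|) * g (x - y) := by
    intro x y
    have habs : |y| ≤ |x| + |x - y| := by
      have := abs_sub_abs_le_abs_sub y x
      have h2 : |y - x| = |x - y| := abs_sub_comm y x
      linarith [abs_sub_abs_le_abs_sub y x, h2.le, h2.ge]
    have hexp : Real.exp (θ * |x - y|) ≤ Real.exp (θ * (x - y)) + Real.exp (-θ * (x - y)) := by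
      rcases abs_cases (x - y) with ⟨h, _⟩ | ⟨h, _⟩
      · rw [h]; nlinarith [Real.exp_pos (-θ * (x - y))]
      · rw [h, mul_neg, ← neg_mul]; nlinarith [Real.exp_pos (θ * (x - y))]
    have h1 : ‖(heatKernel t (x - y) : ℂ) * φ y‖ = heatKernel t (x - y) * ‖φ y‖ := by
      rw [norm_mul, Complex.norm_real, Real.norm_of_nonneg (heatKernel_nonneg t _)]
    rw [h1]
    have hk := heatKernel_nonneg t (x - y)
    calc heatKernel t (x - y) * ‖φ y‖
        ≤ heatKernel t (x - y) * (M * Real.exp (θ * |y|)) :=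
          mul_le_mul_of_nonneg_left (hbound y) hk
      _ ≤ heatKernel t (x - y) * (M * (Real.exp (θ * |x|) * Real.exp (θ * |x - y|))) := by
          apply mul_le_mul_of_nonneg_left _ hk
          apply mul_le_mul_of_nonneg_left _ hM
          rw [← Real.exp_add]
          apply Real.exp_le_exp.mpr
          nlinarith
      _ ≤ heatKernel t (x - y) *
            (M * (Real.exp (θ * |x|) * (Real.exp (θ * (x - y)) + Real.exp (-θ * (x - y))))) := by
          apply mul_le_mul_of_nonneg_left _ hk
          apply mul_le_mul_of_nonneg_left _ hM
          exact mul_le_mul_of_nonneg_left hexp (Real.exp_pos _).le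
      _ = M * Real.exp (θ * |x|) * g (x - y) := by
          rw [hgdef]; ring
  -- integrability
  have hcont : ∀ x : ℝ, Continuous (fun y => (heatKernel t (x - y) : ℂ) * φ y) := by
    intro x
    exact (Complex.continuous_ofReal.comp
      ((heatKernel_continuous t ht).comp (continuous_const.sub continuous_id))).mul hφ
  have hint : ∀ x : ℝ, Integrable (fun y => (heatKernel t (x - y) : ℂ) * φ y) := by
    intro x
    have hgx : Integrable (fun y => M * Real.exp (θ * |x|) * g (x - y)) :=
      (hgint.comp_sub_left x).const_mul _
    exact hgx.mono' (hcont x).aestronglyMeasurable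
      (Filter.Eventually.of_forall fun y => hptwise x y)
  refine ⟨hint, ?_⟩
  -- norm bound of heatOp
  have hOp : ∀ x : ℝ, ‖heatOp t φ x‖ ≤ M * Real.exp (θ * |x|) * (2 * Real.exp (θ ^ 2 * t)) := by
    intro x
    have hgx : Integrable (fun y => M * Real.exp (θ * |x|) * g (x - y)) :=
      (hgint.comp_sub_left x).const_mul _
    calc ‖heatOp t φ x‖ ≤ ∫ y, M * Real.exp (θ * |x|) * g (x - y) :=
          norm_integral_le_of_norm_le hgx (Filter.Eventually.of_forall fun y => hptwise x y)
      _ = M * Real.exp (θ * |x|) * (2 * Real.exp (θ ^ 2 * t)) := by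
          rw [MeasureTheory.integral_const_mul, integral_sub_left_eq_self g volume x, hgval]
  -- conclude
  have hfinal : ∀ x : ℝ, Real.exp (-θ * |x|) * ‖heatOp t φ x‖
      ≤ 2 * Real.exp (θ ^ 2 * t) * M := by
    intro x
    have h := mul_le_mul_of_nonneg_left (hOp x) (Real.exp_pos (-θ * |x|)).le
    calc Real.exp (-θ * |x|) * ‖heatOp t φ x‖
        ≤ Real.exp (-θ * |x|) * (M * Real.exp (θ * |x|) * (2 * Real.exp (θ ^ 2 * t))) := h
      _ = (Real.exp (-θ * |x|) * Real.exp (θ * |x|)) * (M * (2 * Real.exp (θ ^ 2 * t))) := by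
          ring
      _ = 2 * Real.exp (θ ^ 2 * t) * M := by
          rw [← Real.exp_add, neg_mul, neg_add_cancel, Real.exp_zero, one_mul]
          ring
  calc CEnormE θ (heatOp t φ)
      ≤ ENNReal.ofReal (2 * Real.exp (θ ^ 2 * t) * M) := by
        apply iSup_le
        intro x
        exact ENNReal.ofReal_le_ofReal (hfinal x)
    _ = ENNReal.ofReal (2 * Real.exp (θ ^ 2 * t)) * CEnormE θ φ := by
        rw [ENNReal.ofReal_mul (by positivity), ENNReal.ofReal_toReal hfin.ne]
end
end

section
/- Quantitative Skorokhod representation theorem (Proposition A.1). Let C ≥ 1 and 0 < c ≤ 1 be constants, and let α ∈ (0,1], β > 0, κ ∈ (0,1], θ > 0 be parameters. For L ranging over the dyadic numbers {1,2,4,...} together with ∞, let μ_L be Borel probability measures on the space CE^θ(ℝ) of continuous functions φ : ℝ → ℂ with ‖φ‖_{CE^θ} := sup_x e^{-θ|x|}|φ(x)| < ∞, satisfying: (i) (Hölder regularity) for all R ≥ 10 and λ > 0, sup_L μ_L( { ‖φ‖_{C^α([-R,R])} ≥ C (log R + λ)^{1/2} } ) ≤ C e^{-cλ}; (ii) (density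 estimate) for all x ∈ ℝ and a < b, sup_L μ_L( { Re φ(x) ∈ [a,b] } ) ≤ C |b-a|^κ and sup_L μ_L( { Im φ(x) ∈ [a,b] } ) ≤ C |b-a|^κ; (iii) (Wasserstein estimate) for every dyadic L there exists a Borel probability measure γ_L on CE^θ(ℝ) × CE^θ(ℝ) with first marginal μ_∞ and second marginal μ_L such that ∫ ‖φ - ψ‖_{CE^θ} dγ_L(φ,ψ) ≤ C e^{-c L^β}. Then there exist constants C' ≥ 1, c' > 0, η > 0 depending only on C, c, α, β, κ, θ, a probability space (Ω, 𝓕, P), and random variables φ_L : Ω → CE^θ(ℝ) for each dyadic L and L = ∞, such that: (a) the law of φ_L equals μ_L for every L; and (b) for every dyadic L, P( ‖φ_∞ - φ_L‖_{C⁰([-L^η, L^η])} > L^{-η} ) ≤ C' e^{-c' L^η}. -/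
open MeasureTheory Real Set ENNReal

noncomputable section

/-- The space `CE^θ(ℝ)` of continuous functions `ℝ → ℂ` with finite exponentially weighted
sup-norm `sup_x e^{-θ|x|} |φ(x)|`. -/
structure CEspace (θ : ℝ) where
  toFun : ℝ → ℂ
  continuous_toFun : Continuous toFun
  bdd : BddAbove (Set.range fun x => Real.exp (-θ * |x|) * ‖toFun x‖)

namespace CEspace

variable {θ : ℝ}

/-- The isometric embedding of `CE^θ(ℝ)` into the bounded continuous functions, given by
multiplying with the weight `e^{-θ|x|}`. -/
def toBCF (φ : CEspace θ) : BoundedContinuousFunction ℝ ℂ :=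
  BoundedContinuousFunction.ofNormedAddCommGroup
    (fun x => Real.exp (-θ * |x|) • φ.toFun x)
    (by
      have h : Continuous fun x : ℝ => Real.exp (-θ * |x|) := by fun_prop
      exact h.smul φ.continuous_toFun)
    (sSup (Set.range fun x => Real.exp (-θ * |x|) * ‖φ.toFun x‖))
    (fun x => by
      have h : ‖Real.exp (-θ * |x|) • φ.toFun x‖ = Real.exp (-θ * |x|) * ‖φ.toFun x‖ := by
        rw [norm_smul, Real.norm_eq_abs, abs_of_pos (Real.exp_pos _)]
      rw [h]
      exact le_csSup φ.bdd ⟨x, rfl⟩)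

/-- `CE^θ(ℝ)` carries the topology of the weighted sup-norm `‖φ‖_{CE^θ}`, i.e. the topology
induced by the isometric embedding into bounded continuous functions. -/
instance : TopologicalSpace (CEspace θ) := TopologicalSpace.induced toBCF inferInstance

/-- The Borel σ-algebra on `CE^θ(ℝ)`. -/
instance : MeasurableSpace (CEspace θ) := borel (CEspace θ)

end CEspace

/-- The `ℝ≥0∞`-valued Hölder norm `‖f‖_{C^α(I)}` (for `α ∈ (0,1]`). -/
def holderE (α : ℝ) (I : Set ℝ) (f : ℝ → ℂ) : ℝ≥0∞ :=
  (⨆ x ∈ I, (‖f x‖₊ : ℝ≥0∞)) +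
    ⨆ x ∈ I, ⨆ y ∈ I, ⨆ _ : x ≠ y, ⨆ _ : |x - y| ≤ 1,
      ENNReal.ofReal (‖f x - f y‖ / |x - y| ^ α)


namespace QSkor

variable {θ : ℝ}

lemma CE_ext {φ ψ : CEspace θ} (h : φ.toFun = ψ.toFun) : φ = ψ := by
  cases φ; cases ψ; simpa using h

lemma toBCF_apply (φ : CEspace θ) (x : ℝ) :
    φ.toBCF x = Real.exp (-θ * |x|) • φ.toFun x := rfl

lemma toBCF_injective : Function.Injective (CEspace.toBCF (θ := θ)) := by
  intro φ ψ h
  apply CE_ext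
  funext x
  have hx := congrArg (fun f : BoundedContinuousFunction ℝ ℂ => f x) h
  simp only [toBCF_apply] at hx
  have he : Real.exp (-θ * |x|) ≠ 0 := (Real.exp_pos _).ne'
  exact (smul_right_injective ℂ he) hx

lemma continuous_toBCF : Continuous (CEspace.toBCF (θ := θ)) := continuous_induced_dom

lemma inducing_toBCF : Topology.IsInducing (CEspace.toBCF (θ := θ)) := ⟨rfl⟩

lemma toFun_eq_exp_smul (φ : CEspace θ) (x : ℝ) :
    φ.toFun x = Real.exp (θ * |x|) • φ.toBCF x := by
  rw [toBCF_apply, smul_smul, ← Real.exp_add]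
  ring_nf
  simp

/-- Build a `CEspace θ` element from a bounded continuous function by unweighting. -/
def ofBCF (h : BoundedContinuousFunction ℝ ℂ) : CEspace θ where
  toFun := fun x => Real.exp (θ * |x|) • h x
  continuous_toFun := by
    have : Continuous fun x : ℝ => Real.exp (θ * |x|) := by fun_prop
    exact this.smul h.continuous
  bdd := by
    refine ⟨‖h‖, ?_⟩
    rintro y ⟨x, rfl⟩
    simp only
    rw [norm_smul, Real.norm_eq_abs, abs_of_pos (Real.exp_pos _), ← mul_assoc,
      ← Real.exp_add]
    have : -θ * |x| + θ * |x| = 0 := by ring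
    rw [this, Real.exp_zero, one_mul]
    exact h.norm_coe_le_norm x

lemma toBCF_ofBCF (h : BoundedContinuousFunction ℝ ℂ) : (ofBCF (θ := θ) h).toBCF = h := by
  ext x
  rw [toBCF_apply]
  show Real.exp (-θ * |x|) • (Real.exp (θ * |x|) • h x) = h x
  rw [smul_smul, ← Real.exp_add]
  have : -θ * |x| + θ * |x| = 0 := by ring
  rw [this, Real.exp_zero, one_smul]

lemma continuous_eval (x : ℝ) : Continuous fun φ : CEspace θ => φ.toFun x := by
  have h1 : Continuous fun φ : CEspace θ => φ.toBCF x := by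
    exact (continuous_eval_const x).comp continuous_toBCF
  have : (fun φ : CEspace θ => φ.toFun x) = fun φ => Real.exp (θ * |x|) • φ.toBCF x := by
    funext φ; exact toFun_eq_exp_smul φ x
  rw [this]
  exact (continuous_const : Continuous fun _ : CEspace θ => Real.exp (θ * |x|)).smul h1

instance : BorelSpace (CEspace θ) := ⟨rfl⟩

/-- The natural map to continuous functions with the compact-open topology. -/
def ι (φ : CEspace θ) : C(ℝ, ℂ) := ⟨φ.toFun, φ.continuous_toFun⟩

lemma ι_injective : Function.Injective (ι (θ := θ)) := by
  intro φ ψ h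
  apply CE_ext
  exact congrArg ContinuousMap.toFun h

lemma continuous_ι : Continuous (ι (θ := θ)) := by
  apply ContinuousMap.continuous_of_continuous_uncurry
  have : (Function.uncurry fun φ (x : ℝ) => (ι (θ := θ) φ) x)
      = fun p : CEspace θ × ℝ => Real.exp (θ * |p.2|) • p.1.toBCF p.2 := by
    funext p; exact toFun_eq_exp_smul p.1 p.2
  rw [this]
  have h1 : Continuous fun p : CEspace θ × ℝ => p.1.toBCF p.2 := by
    have := (ContinuousEval.continuous_eval : Continuous fun p : BoundedContinuousFunction ℝ ℂ × ℝ => p.1 p.2)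
    exact this.comp (continuous_toBCF.prodMap continuous_id)
  have h2 : Continuous fun p : CEspace θ × ℝ => Real.exp (θ * |p.2|) := by fun_prop
  exact h2.smul h1




noncomputable instance : MeasurableSpace C(ℝ, ℂ) := borel _
instance : BorelSpace C(ℝ, ℂ) := ⟨rfl⟩

set_option synthInstance.maxHeartbeats 1000000 in
instance : PolishSpace C(ℝ, ℂ) := inferInstance

instance : Nonempty (CEspace θ) :=
  ⟨⟨fun _ => 0, continuous_const, ⟨0, by rintro y ⟨x, rfl⟩; simp⟩⟩⟩

/-- Growth-controlled subsets of `CEspace θ`. -/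
def Sn (θ : ℝ) (n : ℕ) : Set (CEspace θ) :=
  {φ | ∀ x : ℝ, ‖φ.toFun x‖ ≤ (n : ℝ) * (1 + |x|)}

lemma isClosed_Sn (θ : ℝ) (n : ℕ) : IsClosed (Sn θ n) := by
  have : Sn θ n = ⋂ x : ℝ, {φ : CEspace θ | ‖φ.toFun x‖ ≤ (n : ℝ) * (1 + |x|)} := by
    ext φ; simp [Sn]
  rw [this]
  refine isClosed_iInter fun x => ?_
  exact isClosed_le (continuous_norm.comp (continuous_eval x)) continuous_const

lemma exp_growth_bound {θ : ℝ} (hθ : 0 < θ) (t : ℝ) (ht : 0 ≤ t) :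
    Real.exp (-θ * t) * (1 + t) ≤ 1 + 1 / θ := by
  have h1 : Real.exp (-θ * t) ≤ 1 := by
    rw [Real.exp_le_one_iff]; nlinarith
  have h2 : Real.exp (-θ * t) * t ≤ 1 / θ := by
    have h3 : θ * t ≤ Real.exp (θ * t) := by linarith [Real.add_one_le_exp (θ * t)]
    have h4 : Real.exp (-θ * t) = (Real.exp (θ * t))⁻¹ := by
      rw [← Real.exp_neg]; ring_nf
    rw [h4, inv_mul_eq_div, div_le_div_iff₀ (Real.exp_pos _) hθ]
    calc t * θ = θ * t := mul_comm t θ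
    _ ≤ Real.exp (θ * t) := h3
    _ = 1 * Real.exp (θ * t) := (one_mul _).symm
  nlinarith [Real.exp_pos (-θ * t)]

lemma exp_growth_decay {θ : ℝ} (hθ : 0 < θ) (t : ℝ) (ht : 0 ≤ t) :
    Real.exp (-θ * t) * (1 + t) ≤ (1 + 2 / θ) * Real.exp (-(θ / 2) * t) := by
  have h := exp_growth_bound (θ := θ / 2) (by linarith) t ht
  have : Real.exp (-θ * t) = Real.exp (-(θ / 2) * t) * Real.exp (-(θ / 2) * t) := by
    rw [← Real.exp_add]; ring_nf
  rw [this]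
  have hp := Real.exp_pos (-(θ / 2) * t)
  have h2 : 1 + 2 / (θ / 2) / 2 = 1 + 2 / θ := by
    field_simp
  calc Real.exp (-(θ / 2) * t) * Real.exp (-(θ / 2) * t) * (1 + t)
      = Real.exp (-(θ / 2) * t) * (Real.exp (-(θ / 2) * t) * (1 + t)) := by ring
  _ ≤ Real.exp (-(θ / 2) * t) * (1 + 1 / (θ / 2)) := by
      exact mul_le_mul_of_nonneg_left h hp.le
  _ = (1 + 2 / θ) * Real.exp (-(θ / 2) * t) := by rw [one_div, inv_div]; ring

/-- The image of `Sn` in `C(ℝ, ℂ)`. -/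
lemma image_Sn {θ : ℝ} (hθ : 0 < θ) (n : ℕ) :
    ι '' Sn θ n = {f : C(ℝ, ℂ) | ∀ x : ℝ, ‖f x‖ ≤ (n : ℝ) * (1 + |x|)} := by
  ext f
  constructor
  · rintro ⟨φ, hφ, rfl⟩
    exact hφ
  · intro hf
    have hb : BddAbove (Set.range fun x => Real.exp (-θ * |x|) * ‖f x‖) := by
      refine ⟨(n : ℝ) * (1 + 1 / θ), ?_⟩
      rintro y ⟨x, rfl⟩
      have h1 : Real.exp (-θ * |x|) * ‖f x‖ ≤ Real.exp (-θ * |x|) * ((n : ℝ) * (1 + |x|)) :=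
        mul_le_mul_of_nonneg_left (hf x) (Real.exp_pos _).le
      have h2 := exp_growth_bound hθ |x| (abs_nonneg x)
      calc Real.exp (-θ * |x|) * ‖f x‖ ≤ (n : ℝ) * (Real.exp (-θ * |x|) * (1 + |x|)) := by
            rw [mul_comm (n:ℝ)] at h1 ⊢; linarith [h1]
      _ ≤ (n : ℝ) * (1 + 1 / θ) := mul_le_mul_of_nonneg_left h2 (Nat.cast_nonneg n)
    exact ⟨⟨f, f.continuous, hb⟩, hf, rfl⟩

/-- **Core closedness lemma**: the image under `ι` of a closed subset of a growth class
is closed in `C(ℝ, ℂ)`. -/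
lemma isClosed_image_inter {θ : ℝ} (hθ : 0 < θ) (n : ℕ) {F : Set (CEspace θ)}
    (hF : IsClosed F) : IsClosed (ι '' (Sn θ n ∩ F)) := by
  refine IsSeqClosed.isClosed ?_
  intro f g hf hg
  -- choose preimages
  choose φ hφ hφf using hf
  -- locally uniform convergence
  have hgC := hg
  rw [ContinuousMap.tendsto_iff_forall_isCompact_tendstoUniformlyOn] at hg
  -- Cauchy sequence in BCF
  have hcauchy : CauchySeq fun j => (φ j).toBCF := by
    rw [Metric.cauchySeq_iff]
    intro ε hε
    -- choose R so that the tail is small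
    obtain ⟨R, hR0, hR⟩ : ∃ R : ℝ, 0 ≤ R ∧
        2 * (n : ℝ) * ((1 + 2 / θ) * Real.exp (-(θ / 2) * R)) < ε / 2 := by
      have htend : Filter.Tendsto (fun R : ℝ =>
          2 * (n : ℝ) * ((1 + 2 / θ) * Real.exp (-(θ / 2) * R))) Filter.atTop (nhds 0) := by
        have h1 : Filter.Tendsto (fun R : ℝ => Real.exp (-(θ / 2) * R))
            Filter.atTop (nhds 0) := by
          have : Filter.Tendsto (fun R : ℝ => -(θ / 2) * R) Filter.atTop Filter.atBot :=
            Filter.Tendsto.neg_mul_atTop (by linarith) tendsto_const_nhds Filter.tendsto_id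
              |>.congr (fun x => rfl)
          exact Real.tendsto_exp_atBot.comp this
        have := h1.const_mul ((1 + 2 / θ)) |>.const_mul (2 * (n : ℝ))
        simpa using this
      have := htend.eventually (eventually_lt_nhds (by positivity : (0:ℝ) < ε / 2))
      rcases (this.and (Filter.eventually_ge_atTop 0)).exists with ⟨R, h1, h2⟩
      exact ⟨R, h2, h1⟩
    -- uniform convergence on [-R, R]
    have hunif := hg (Set.Icc (-R) R) isCompact_Icc
    rw [Metric.tendstoUniformlyOn_iff] at hunif
    have hev := hunif (ε / 4) (by positivity)
    rw [Filter.eventually_atTop] at hev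
    obtain ⟨N, hN⟩ := hev
    refine ⟨N, fun a ha b hb => ?_⟩
    have hkey : ∀ x : ℝ, dist ((φ a).toBCF x) ((φ b).toBCF x) ≤ 3 * ε / 4 := by
      intro x
      have hdeq : dist ((φ a).toBCF x) ((φ b).toBCF x)
          = Real.exp (-θ * |x|) * dist ((φ a).toFun x) ((φ b).toFun x) := by
        simp only [toBCF_apply, dist_eq_norm, ← smul_sub, norm_smul, Real.norm_eq_abs,
          abs_of_pos (Real.exp_pos _)]
      rw [hdeq]
      rcases le_or_gt |x| R with hxR | hxR
      · have hx1 : x ∈ Set.Icc (-R) R := abs_le.mp hxR |>.imp neg_le.mp id |> fun h => ⟨by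
          linarith [(abs_le.mp hxR).1], (abs_le.mp hxR).2⟩
        have h1 := hN a ha x hx1
        have h2 := hN b hb x hx1
        have hfa : (φ a).toFun x = f a x := congrArg (fun u : C(ℝ,ℂ) => u x) (hφf a)
        have hfb : (φ b).toFun x = f b x := congrArg (fun u : C(ℝ,ℂ) => u x) (hφf b)
        have hd : dist ((φ a).toFun x) ((φ b).toFun x) ≤ ε / 2 := by
          rw [hfa, hfb]
          calc dist (f a x) (f b x) ≤ dist (g x) (f a x) + dist (g x) (f b x) :=
            dist_triangle_left _ _ _
          _ ≤ ε / 4 + ε / 4 := by linarith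
          _ = ε / 2 := by ring
        have hexp : Real.exp (-θ * |x|) ≤ 1 := by
          rw [Real.exp_le_one_iff]
          have := abs_nonneg x
          nlinarith
        calc Real.exp (-θ * |x|) * dist ((φ a).toFun x) ((φ b).toFun x)
            ≤ 1 * (ε / 2) := mul_le_mul hexp hd dist_nonneg one_pos.le
        _ ≤ 3 * ε / 4 := by linarith
      · have hga := (hφ a).1 x
        have hgb := (hφ b).1 x
        have hd : dist ((φ a).toFun x) ((φ b).toFun x) ≤ 2 * (n : ℝ) * (1 + |x|) := by
          calc dist ((φ a).toFun x) ((φ b).toFun x)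
              ≤ ‖(φ a).toFun x‖ + ‖(φ b).toFun x‖ := dist_le_norm_add_norm _ _
          _ ≤ 2 * (n : ℝ) * (1 + |x|) := by linarith
        calc Real.exp (-θ * |x|) * dist ((φ a).toFun x) ((φ b).toFun x)
            ≤ Real.exp (-θ * |x|) * (2 * (n : ℝ) * (1 + |x|)) :=
              mul_le_mul_of_nonneg_left hd (Real.exp_pos _).le
        _ = 2 * (n : ℝ) * (Real.exp (-θ * |x|) * (1 + |x|)) := by ring
        _ ≤ 2 * (n : ℝ) * ((1 + 2 / θ) * Real.exp (-(θ / 2) * |x|)) := by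
              have := exp_growth_decay hθ |x| (abs_nonneg x)
              have hn : (0:ℝ) ≤ 2 * (n : ℝ) := by positivity
              exact mul_le_mul_of_nonneg_left this hn
        _ ≤ 2 * (n : ℝ) * ((1 + 2 / θ) * Real.exp (-(θ / 2) * R)) := by
              have hexp : Real.exp (-(θ / 2) * |x|) ≤ Real.exp (-(θ / 2) * R) := by
                apply Real.exp_le_exp.mpr
                nlinarith
              have hn : (0:ℝ) ≤ 2 * (n : ℝ) * (1 + 2 / θ) := by positivity
              calc 2 * (n : ℝ) * ((1 + 2 / θ) * Real.exp (-(θ / 2) * |x|))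
                  = 2 * (n : ℝ) * (1 + 2 / θ) * Real.exp (-(θ / 2) * |x|) := by ring
              _ ≤ 2 * (n : ℝ) * (1 + 2 / θ) * Real.exp (-(θ / 2) * R) :=
                  mul_le_mul_of_nonneg_left hexp hn
              _ = 2 * (n : ℝ) * ((1 + 2 / θ) * Real.exp (-(θ / 2) * R)) := by ring
        _ ≤ 3 * ε / 4 := by linarith
    have : dist (φ a).toBCF (φ b).toBCF ≤ 3 * ε / 4 :=
      (BoundedContinuousFunction.dist_le (by positivity)).mpr hkey
    linarith
  obtain ⟨bfun, hbfun⟩ := cauchySeq_tendsto_of_complete hcauchy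
  set φlim : CEspace θ := ofBCF bfun with hφlim
  have htendX : Filter.Tendsto φ Filter.atTop (nhds φlim) := by
    rw [inducing_toBCF.tendsto_nhds_iff]
    show Filter.Tendsto (fun j => (φ j).toBCF) Filter.atTop (nhds φlim.toBCF)
    rw [hφlim, toBCF_ofBCF]
    exact hbfun
  have hmem : φlim ∈ Sn θ n ∩ F :=
    ((isClosed_Sn θ n).inter hF).mem_of_tendsto htendX (Filter.Eventually.of_forall hφ)
  refine ⟨φlim, hmem, ?_⟩
  have h1 : Filter.Tendsto (fun j => ι (φ j)) Filter.atTop (nhds (ι φlim)) :=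
    (continuous_ι.tendsto _).comp htendX
  have h2 : (fun j => ι (φ j)) = f := funext hφf
  rw [h2] at h1
  exact (tendsto_nhds_unique hgC h1).symm

/-- A measurable one-sided inverse to `e ∘ ι` on the growth classes. -/
def rinv (θ : ℝ) (e : C(ℝ, ℂ) → ℝ) : ℝ → CEspace θ := fun t =>
  open scoped Classical in
  if h : ∃ φ : CEspace θ, φ ∈ (⋃ n, Sn θ n) ∧ e (ι φ) = t then h.choose
  else Classical.arbitrary _

lemma rinv_eq {θ : ℝ} {e : C(ℝ, ℂ) → ℝ} (heinj : Function.Injective e)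
    {φ : CEspace θ} (hφ : φ ∈ ⋃ n, Sn θ n) : rinv θ e (e (ι φ)) = φ := by
  have h : ∃ ψ : CEspace θ, ψ ∈ (⋃ n, Sn θ n) ∧ e (ι ψ) = e (ι φ) := ⟨φ, hφ, rfl⟩
  classical
  have : rinv θ e (e (ι φ)) = h.choose := by
    rw [rinv]
    exact dif_pos h
  rw [this]
  exact ι_injective (heinj h.choose_spec.2)

lemma borel_image_inter_open {θ : ℝ} (hθ : 0 < θ) (n : ℕ) {U : Set (CEspace θ)}
    (hU : IsOpen U) : MeasurableSet (ι '' (Sn θ n ∩ U)) := by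
  have h1 : Sn θ n ∩ U = Sn θ n \ (Sn θ n ∩ Uᶜ) := by
    ext ψ; simp only [Set.mem_inter_iff, Set.mem_diff, Set.mem_compl_iff]; tauto
  rw [h1, Set.image_diff ι_injective]
  have h2 : IsClosed (ι '' Sn θ n) := by
    have := isClosed_image_inter hθ n (isClosed_univ (X := CEspace θ))
    rwa [Set.inter_univ] at this
  have h3 : IsClosed (ι '' (Sn θ n ∩ Uᶜ)) := isClosed_image_inter hθ n hU.isClosed_compl
  exact h2.measurableSet.diff h3.measurableSet

lemma measurable_rinv {θ : ℝ} (hθ : 0 < θ) {e : C(ℝ, ℂ) → ℝ}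
    (he : MeasurableEmbedding e) : Measurable (rinv θ e) := by
  have key : ∀ U : Set (CEspace θ), IsOpen U → MeasurableSet (rinv θ e ⁻¹' U) := by
    intro U hU
    classical
    set B : Set ℝ := ⋃ n, e '' (ι '' (Sn θ n)) with hBdef
    have hmemB : ∀ t : ℝ, t ∈ B ↔ ∃ φ : CEspace θ, φ ∈ (⋃ n, Sn θ n) ∧ e (ι φ) = t := by
      intro t
      constructor
      · rintro ⟨_, ⟨n, rfl⟩, ht⟩
        rcases ht with ⟨_, ⟨ψ, hψ, rfl⟩, rfl⟩
        exact ⟨ψ, Set.mem_iUnion.mpr ⟨n, hψ⟩, rfl⟩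
      · rintro ⟨φ, hφ, rfl⟩
        rcases Set.mem_iUnion.mp hφ with ⟨n, hn⟩
        exact Set.mem_iUnion.mpr ⟨n, ⟨ι φ, ⟨φ, hn, rfl⟩, rfl⟩⟩
    have hsplit : rinv θ e ⁻¹' U =
        (⋃ n, e '' (ι '' (Sn θ n ∩ U))) ∪
          (Bᶜ ∩ (if Classical.arbitrary (CEspace θ) ∈ U then Set.univ else ∅)) := by
      ext t
      by_cases hB : t ∈ B
      · rcases (hmemB t).mp hB with ⟨φ, hφ, rfl⟩
        have hr : rinv θ e (e (ι φ)) = φ := rinv_eq he.injective hφ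
        simp only [Set.mem_preimage, hr, Set.mem_union, Set.mem_inter_iff,
          Set.mem_compl_iff]
        constructor
        · intro hφU
          rcases Set.mem_iUnion.mp hφ with ⟨n, hn⟩
          exact Or.inl (Set.mem_iUnion.mpr ⟨n, ⟨ι φ, ⟨φ, ⟨hn, hφU⟩, rfl⟩, rfl⟩⟩)
        · rintro (h | ⟨hc, _⟩)
          · rcases Set.mem_iUnion.mp h with ⟨n, hn⟩
            rcases hn with ⟨_, ⟨ψ, hψ, rfl⟩, ht⟩
            have : ψ = φ := ι_injective (he.injective ht)
            exact this ▸ hψ.2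
          · exact absurd hB hc
      · have hnot : ¬ ∃ φ : CEspace θ, φ ∈ (⋃ n, Sn θ n) ∧ e (ι φ) = t := by
          rw [← hmemB]; exact hB
        have hr : rinv θ e t = Classical.arbitrary _ := by
          rw [rinv]; exact dif_neg hnot
        simp only [Set.mem_preimage, hr, Set.mem_union, Set.mem_inter_iff,
          Set.mem_compl_iff]
        constructor
        · intro harb
          refine Or.inr ⟨hB, ?_⟩
          rw [if_pos harb]; trivial
        · rintro (h | ⟨_, hc⟩)
          · rcases Set.mem_iUnion.mp h with ⟨n, hn⟩
            rcases hn with ⟨_, ⟨ψ, hψ, rfl⟩, ht⟩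
            exact absurd ((hmemB _).mpr ⟨ψ, Set.mem_iUnion.mpr ⟨n, hψ.1⟩, ht⟩) hB
          · by_cases harb : Classical.arbitrary (CEspace θ) ∈ U
            · exact harb
            · rw [if_neg harb] at hc; exact absurd hc (Set.notMem_empty _)
    rw [hsplit]
    have hBmeas : MeasurableSet B := by
      refine MeasurableSet.iUnion fun n => he.measurableSet_image' ?_
      have := borel_image_inter_open hθ n (isOpen_univ (X := CEspace θ))
      rwa [Set.inter_univ] at this
    refine MeasurableSet.union ?_ ?_
    · exact MeasurableSet.iUnion fun n =>
        he.measurableSet_image' (borel_image_inter_open hθ n hU)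
    · refine hBmeas.compl.inter ?_
      by_cases harb : Classical.arbitrary (CEspace θ) ∈ U
      · rw [if_pos harb]; exact MeasurableSet.univ
      · rw [if_neg harb]; exact MeasurableSet.empty
  exact measurable_generateFrom key

lemma norm_le_of_holderE_lt {α R b : ℝ} {f : ℝ → ℂ} (hb : 0 ≤ b)
    (h : holderE α (Set.Icc (-R) R) f < ENNReal.ofReal b) {x : ℝ}
    (hx : x ∈ Set.Icc (-R) R) : ‖f x‖ ≤ b := by
  have h1 : (‖f x‖₊ : ℝ≥0∞) ≤ ⨆ y ∈ Set.Icc (-R) R, (‖f y‖₊ : ℝ≥0∞) := by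
    exact le_iSup₂ (f := fun y (_ : y ∈ Set.Icc (-R) R) => (‖f y‖₊ : ℝ≥0∞)) x hx
  have h2 : (⨆ y ∈ Set.Icc (-R) R, (‖f y‖₊ : ℝ≥0∞)) ≤ holderE α (Set.Icc (-R) R) f :=
    self_le_add_right _ _
  have h3 : (‖f x‖₊ : ℝ≥0∞) < ENNReal.ofReal b := lt_of_le_of_lt (h1.trans h2) h
  rw [← enorm_eq_nnnorm, ← ofReal_norm,
    ENNReal.ofReal_lt_ofReal_iff_of_nonneg (norm_nonneg _)] at h3
  exact h3.le

/-- Tightness: the hypothesis (i) forces full measure of the union of growth classes. -/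
lemma tight_aux {θ C c α : ℝ} (hC : 1 ≤ C) (hc0 : 0 < c)
    (μ : Measure (CEspace θ)) [IsProbabilityMeasure μ]
    (hyp : ∀ R lam : ℝ, 10 ≤ R → 0 < lam →
      μ {φ : CEspace θ |
          ENNReal.ofReal (C * (Real.log R + lam) ^ ((1:ℝ)/2)) ≤
            holderE α (Set.Icc (-R) R) φ.toFun} ≤
        ENNReal.ofReal (C * Real.exp (-c * lam))) :
    μ ((⋃ n, Sn θ n)ᶜ) = 0 := by
  have hC0 : 0 < C := lt_of_lt_of_le one_pos hC
  -- step 1 : for large n, the complement of `Sn n` is covered by the bad sets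
  have hcov : ∀ n : ℕ, 25 * C ^ 2 + 25 ≤ (n : ℝ) →
      (Sn θ n)ᶜ ⊆ ⋃ j : ℕ, {φ : CEspace θ |
        ENNReal.ofReal (C * (Real.log ((j:ℝ) + 10) + ((n : ℝ) + ((j:ℝ) + 10))) ^ ((1:ℝ)/2)) ≤
          holderE α (Set.Icc (-((j:ℝ) + 10)) ((j:ℝ) + 10)) φ.toFun} := by
    intro n hn φ hφ
    simp only [Set.mem_compl_iff, Sn, Set.mem_setOf_eq, not_forall] at hφ
    obtain ⟨x, hx⟩ := hφ
    push_neg at hx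
    set j : ℕ := ⌈|x|⌉₊ with hj
    set R : ℝ := (j : ℝ) + 10 with hRdef
    have hxR : |x| ≤ R := le_trans (Nat.le_ceil _) (by rw [hRdef, hj]; linarith)
    have hR10 : (10 : ℝ) ≤ R := by
      have : (0:ℝ) ≤ (j : ℝ) := Nat.cast_nonneg _
      simp only [hRdef]; linarith
    have hRx : R ≤ |x| + 11 := by
      have := Nat.ceil_lt_add_one (abs_nonneg x)
      simp only [hRdef]; push_cast at this ⊢; linarith
    refine Set.mem_iUnion.mpr ⟨j, ?_⟩
    simp only [Set.mem_setOf_eq]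
    by_contra hcon
    push_neg at hcon
    have hb : (0:ℝ) ≤ C * (Real.log R + ((n : ℝ) + R)) ^ ((1:ℝ)/2) := by
      have hlog : 0 ≤ Real.log R := Real.log_nonneg (by linarith)
      have : (0:ℝ) ≤ Real.log R + ((n : ℝ) + R) := by positivity
      positivity
    have hle := norm_le_of_holderE_lt hb hcon (x := x) (abs_le.mp hxR |> fun h => ⟨h.1, h.2⟩)
    -- now derive the contradiction : C * (...)^(1/2) ≤ n * (1 + |x|)
    have hlogR : Real.log R ≤ R := by
      have := Real.log_le_sub_one_of_pos (by linarith : (0:ℝ) < R)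
      linarith
    have harg : Real.log R + ((n : ℝ) + R) ≤ ((n : ℝ) + 24) * (1 + |x|) := by
      have h0 : (0:ℝ) ≤ |x| := abs_nonneg x
      have hncast : (25:ℝ) ≤ (n : ℝ) := by nlinarith
      nlinarith
    have hkey : C * (Real.log R + ((n : ℝ) + R)) ^ ((1:ℝ)/2) ≤ (n : ℝ) * (1 + |x|) := by
      have h0 : (0:ℝ) ≤ |x| := abs_nonneg x
      have hargnn : (0:ℝ) ≤ Real.log R + ((n : ℝ) + R) := by
        have hlog : 0 ≤ Real.log R := Real.log_nonneg (by linarith)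
        positivity
      have hncast : (25:ℝ) ≤ (n : ℝ) := by nlinarith
      rw [← Real.sqrt_eq_rpow]
      have h1 : Real.sqrt (Real.log R + ((n : ℝ) + R))
          ≤ Real.sqrt (((n : ℝ) + 24) * (1 + |x|)) := Real.sqrt_le_sqrt harg
      have h2 : Real.sqrt (((n : ℝ) + 24) * (1 + |x|))
          ≤ Real.sqrt ((n : ℝ) + 24) * (1 + |x|) := by
        rw [Real.sqrt_mul (by positivity)]
        have hx1 : Real.sqrt (1 + |x|) ≤ 1 + |x| := by
          have := Real.sqrt_le_sqrt (by nlinarith : (1:ℝ) + |x| ≤ (1 + |x|)^2)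
          rwa [Real.sqrt_sq (by linarith)] at this
        exact mul_le_mul_of_nonneg_left hx1 (Real.sqrt_nonneg _)
      have h3 : C * Real.sqrt ((n : ℝ) + 24) ≤ (n : ℝ) := by
        have hsq : C ^ 2 * ((n : ℝ) + 24) ≤ (n : ℝ) ^ 2 := by nlinarith
        have h4 : Real.sqrt (C ^ 2 * ((n : ℝ) + 24)) ≤ Real.sqrt ((n : ℝ) ^ 2) :=
          Real.sqrt_le_sqrt hsq
        rw [Real.sqrt_mul (by positivity), Real.sqrt_sq hC0.le,
          Real.sqrt_sq (by linarith)] at h4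
        exact h4
      calc C * Real.sqrt (Real.log R + ((n : ℝ) + R))
          ≤ C * (Real.sqrt ((n : ℝ) + 24) * (1 + |x|)) :=
            mul_le_mul_of_nonneg_left (h1.trans h2) hC0.le
      _ = C * Real.sqrt ((n : ℝ) + 24) * (1 + |x|) := by ring
      _ ≤ (n : ℝ) * (1 + |x|) := mul_le_mul_of_nonneg_right h3 (by positivity)
    linarith [hle, hkey, hx]
  -- step 2 : measure bound for each large n
  have hbound : ∀ n : ℕ, 25 * C ^ 2 + 25 ≤ (n : ℝ) →
      μ ((Sn θ n)ᶜ) ≤ ENNReal.ofReal (C * Real.exp (-c * n)) *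
        (1 - ENNReal.ofReal (Real.exp (-c)))⁻¹ := by
    intro n hn
    refine le_trans (measure_mono (hcov n hn)) ?_
    refine le_trans (measure_iUnion_le _) ?_
    have hterm : ∀ j : ℕ, μ {φ : CEspace θ |
        ENNReal.ofReal (C * (Real.log ((j:ℝ) + 10) + ((n : ℝ) + ((j:ℝ) + 10))) ^ ((1:ℝ)/2)) ≤
          holderE α (Set.Icc (-((j:ℝ) + 10)) ((j:ℝ) + 10)) φ.toFun}
        ≤ ENNReal.ofReal (C * Real.exp (-c * n)) * ENNReal.ofReal (Real.exp (-c)) ^ j := by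
      intro j
      have h10 : (10:ℝ) ≤ (j:ℝ) + 10 := by
        have : (0:ℝ) ≤ (j:ℝ) := Nat.cast_nonneg _
        linarith
      have hlam : (0:ℝ) < (n : ℝ) + ((j:ℝ) + 10) := by positivity
      refine le_trans (hyp ((j:ℝ) + 10) ((n : ℝ) + ((j:ℝ) + 10)) h10 hlam) ?_
      have hexp : C * Real.exp (-c * ((n : ℝ) + ((j:ℝ) + 10)))
          ≤ (C * Real.exp (-c * n)) * Real.exp (-c) ^ j := by
        rw [← Real.exp_nat_mul]
        rw [mul_assoc, ← Real.exp_add]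
        have h1 : Real.exp (-c * ((n : ℝ) + ((j:ℝ) + 10)))
            ≤ Real.exp (-c * n + (j:ℝ) * -c) := by
          apply Real.exp_le_exp.mpr
          have : (0:ℝ) ≤ c * 10 := by positivity
          ring_nf
          linarith
        exact mul_le_mul_of_nonneg_left h1 hC0.le
      calc ENNReal.ofReal (C * Real.exp (-c * ((n : ℝ) + ((j:ℝ) + 10))))
          ≤ ENNReal.ofReal ((C * Real.exp (-c * n)) * Real.exp (-c) ^ j) :=
            ENNReal.ofReal_le_ofReal hexp
      _ = ENNReal.ofReal (C * Real.exp (-c * n)) * ENNReal.ofReal (Real.exp (-c) ^ j) := by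
            rw [ENNReal.ofReal_mul (by positivity)]
      _ = ENNReal.ofReal (C * Real.exp (-c * n)) * ENNReal.ofReal (Real.exp (-c)) ^ j := by
            rw [ENNReal.ofReal_pow (Real.exp_pos _).le]
    refine le_trans (ENNReal.tsum_le_tsum hterm) ?_
    rw [ENNReal.tsum_mul_left, ENNReal.tsum_geometric]
  -- step 3 : conclusion by letting n → ∞
  have hsub : ∀ n : ℕ, μ ((⋃ m, Sn θ m)ᶜ) ≤ μ ((Sn θ n)ᶜ) := by
    intro n
    apply measure_mono
    intro φ hφ
    simp only [Set.mem_compl_iff, Set.mem_iUnion, not_exists] at hφ ⊢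
    exact hφ n
  have hG : (1 - ENNReal.ofReal (Real.exp (-c)))⁻¹ ≠ ∞ := by
    rw [Ne, ENNReal.inv_eq_top, tsub_eq_zero_iff_le]
    intro hle
    have h1 : (1:ℝ≥0∞) ≤ ENNReal.ofReal (Real.exp (-c)) := hle
    rw [← ENNReal.ofReal_one, ENNReal.ofReal_le_ofReal_iff (Real.exp_pos _).le] at h1
    have := Real.exp_lt_one_iff.mpr (by linarith : -c < 0)
    linarith
  have htend : Filter.Tendsto (fun n : ℕ => ENNReal.ofReal (C * Real.exp (-c * n)) *
      (1 - ENNReal.ofReal (Real.exp (-c)))⁻¹) Filter.atTop (nhds 0) := by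
    have h1 : Filter.Tendsto (fun n : ℕ => C * Real.exp (-c * n)) Filter.atTop (nhds 0) := by
      have h2 : Filter.Tendsto (fun n : ℕ => -c * n) Filter.atTop Filter.atBot :=
        Filter.Tendsto.neg_mul_atTop (by linarith : -c < 0) tendsto_const_nhds
          tendsto_natCast_atTop_atTop
      have h3 := Real.tendsto_exp_atBot.comp h2
      have := h3.const_mul C
      simpa using this
    have h4 : Filter.Tendsto (fun n : ℕ => ENNReal.ofReal (C * Real.exp (-c * n)))
        Filter.atTop (nhds 0) := by
      have := (ENNReal.continuous_ofReal.tendsto 0).comp h1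
      simpa [Function.comp_def] using this
    have := ENNReal.Tendsto.mul_const h4 (Or.inr hG)
    simpa using this
  refine le_antisymm ?_ (zero_le)
  refine ge_of_tendsto htend ?_
  filter_upwards [Filter.eventually_ge_atTop ⌈25 * C ^ 2 + 25⌉₊] with n hn
  have hn' : 25 * C ^ 2 + 25 ≤ (n : ℝ) := le_trans (Nat.le_ceil _) (Nat.cast_le.mpr hn)
  exact le_trans (hsub n) (hbound n hn')

section Quantile

open ProbabilityTheory

variable {X : Type*} [MeasurableSpace X]

/-- The uniform measure on `(0,1)`. -/
def unif : Measure ℝ := volume.restrict (Set.Ioo 0 1)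

instance : IsProbabilityMeasure (unif) := by
  constructor
  rw [unif, Measure.restrict_apply MeasurableSet.univ, Set.univ_inter, Real.volume_Ioo]
  norm_num

/-- The quantile transform associated to the conditional CDF of `ρ`. -/
def qtl (ρ : Measure (X × ℝ)) : X × ℝ → ℝ := fun p =>
  if 0 < p.2 ∧ p.2 < 1 then sInf {t | p.2 ≤ condCDF ρ p.1 t} else 0

variable (ρ : Measure (X × ℝ)) [IsFiniteMeasure ρ]

lemma qtl_aux_nonempty {a : X} {u : ℝ} (hu1 : u < 1) :
    {t | u ≤ condCDF ρ a t}.Nonempty := by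
  have h := tendsto_condCDF_atTop ρ a
  have := (h.eventually (eventually_ge_nhds hu1)).exists
  exact this

lemma qtl_aux_bddBelow {a : X} {u : ℝ} (hu0 : 0 < u) :
    BddBelow {t | u ≤ condCDF ρ a t} := by
  have h := tendsto_condCDF_atBot ρ a
  obtain ⟨t₀, ht₀⟩ := (h.eventually (eventually_lt_nhds hu0)).exists
  refine ⟨t₀, fun t ht => ?_⟩
  by_contra hlt
  push_neg at hlt
  exact absurd (le_trans ht ((condCDF ρ a).mono hlt.le)) (not_le.mpr ht₀)

lemma qtl_galois {a : X} {u : ℝ} (hu0 : 0 < u) (hu1 : u < 1) (s : ℝ) :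
    sInf {t | u ≤ condCDF ρ a t} ≤ s ↔ u ≤ condCDF ρ a s := by
  constructor
  · intro hinf
    have hev : ∀ᶠ t in nhdsWithin s (Set.Ioi s), u ≤ condCDF ρ a t := by
      filter_upwards [self_mem_nhdsWithin] with t ht
      have h1 : sInf {t | u ≤ condCDF ρ a t} < t := lt_of_le_of_lt hinf ht
      obtain ⟨t', ht', htt'⟩ := (csInf_lt_iff (qtl_aux_bddBelow ρ hu0)
        (qtl_aux_nonempty ρ hu1)).mp h1
      exact le_trans ht' ((condCDF ρ a).mono htt'.le)
    have htend : Filter.Tendsto (condCDF ρ a) (nhdsWithin s (Set.Ioi s))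
        (nhds (condCDF ρ a s)) :=
      ((condCDF ρ a).right_continuous s).mono_left (nhdsWithin_mono s Set.Ioi_subset_Ici_self)
    exact ge_of_tendsto htend hev
  · intro h
    exact csInf_le (qtl_aux_bddBelow ρ hu0) h

lemma measurable_qtl : Measurable (qtl ρ) := by
  apply measurable_of_Iic
  intro s
  have hset : qtl ρ ⁻¹' Set.Iic s =
      ({p : X × ℝ | 0 < p.2 ∧ p.2 < 1} ∩ {p : X × ℝ | p.2 ≤ condCDF ρ p.1 s}) ∪
        ({p : X × ℝ | 0 < p.2 ∧ p.2 < 1}ᶜ ∩ (if (0:ℝ) ≤ s then Set.univ else ∅)) := by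
    ext p
    simp only [Set.mem_preimage, Set.mem_Iic, qtl, Set.mem_union, Set.mem_inter_iff,
      Set.mem_setOf_eq, Set.mem_compl_iff]
    by_cases hp : 0 < p.2 ∧ p.2 < 1
    · rw [if_pos hp]
      simp only [hp, not_true_eq_false, false_and, or_false, true_and]
      exact qtl_galois ρ hp.1 hp.2 s
    · rw [if_neg hp]
      simp only [hp, false_and, false_or, not_false_eq_true, true_and]
      by_cases hs : (0:ℝ) ≤ s
      · rw [if_pos hs]; simp [hs]
      · rw [if_neg hs]; simp [hs]
  rw [hset]
  have h1 : MeasurableSet {p : X × ℝ | 0 < p.2 ∧ p.2 < 1} := by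
    have : {p : X × ℝ | 0 < p.2 ∧ p.2 < 1} = Prod.snd ⁻¹' Set.Ioo 0 1 := rfl
    rw [this]; exact measurable_snd measurableSet_Ioo
  have h2 : MeasurableSet {p : X × ℝ | p.2 ≤ condCDF ρ p.1 s} :=
    measurableSet_le measurable_snd ((measurable_condCDF ρ s).comp measurable_fst)
  refine (h1.inter h2).union (h1.compl.inter ?_)
  by_cases hs : (0:ℝ) ≤ s
  · rw [if_pos hs]; exact MeasurableSet.univ
  · rw [if_neg hs]; exact MeasurableSet.empty

lemma unif_qtl_Iic (a : X) (s : ℝ) :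
    unif {u : ℝ | qtl ρ (a, u) ≤ s} = ENNReal.ofReal (condCDF ρ a s) := by
  have hmeas : MeasurableSet {u : ℝ | qtl ρ (a, u) ≤ s} := by
    have : {u : ℝ | qtl ρ (a, u) ≤ s} = (fun u => qtl ρ (a, u)) ⁻¹' Set.Iic s := rfl
    rw [this]
    exact ((measurable_qtl ρ).comp measurable_prodMk_left) measurableSet_Iic
  rw [unif, Measure.restrict_apply hmeas]
  set cval : ℝ := condCDF ρ a s with hc
  have hc0 : 0 ≤ cval := condCDF_nonneg ρ a s
  have hc1 : cval ≤ 1 := condCDF_le_one ρ a s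
  have hset : {u : ℝ | qtl ρ (a, u) ≤ s} ∩ Set.Ioo 0 1 = Set.Ioc 0 cval \ {1} := by
    ext u
    simp only [Set.mem_inter_iff, Set.mem_setOf_eq, Set.mem_Ioo, Set.mem_diff,
      Set.mem_Ioc, Set.mem_singleton_iff]
    constructor
    · rintro ⟨hq, hu0, hu1⟩
      have := (qtl_galois ρ hu0 hu1 s).mp (by
        rw [qtl, if_pos ⟨hu0, hu1⟩] at hq; exact hq)
      exact ⟨⟨hu0, this⟩, ne_of_lt hu1⟩
    · rintro ⟨⟨hu0, huc⟩, hu1⟩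
      have hul : u < 1 := lt_of_le_of_ne (le_trans huc hc1) hu1
      refine ⟨?_, hu0, hul⟩
      rw [qtl, if_pos ⟨hu0, hul⟩]
      exact (qtl_galois ρ hu0 hul s).mpr huc
  rw [hset, measure_diff_null (by simp : volume ({1} : Set ℝ) = 0), Real.volume_Ioc]
  simp

/-- The randomization identity: pushing `ρ.fst ⊗ unif` through the quantile transform
recovers `ρ`. -/
lemma map_qtl_eq (hprob : IsProbabilityMeasure ρ) :
    ((ρ.fst).prod unif).map (fun p : X × ℝ => (p.1, qtl ρ p)) = ρ := by
  have hfst : IsProbabilityMeasure ρ.fst := by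
    constructor
    rw [Measure.fst_univ]
    exact hprob.measure_univ
  have hmap_meas : Measurable (fun p : X × ℝ => (p.1, qtl ρ p)) :=
    measurable_fst.prodMk (measurable_qtl ρ)
  -- the π-system of rectangles with Iic
  have hIic : IsCountablySpanning (Set.range (Set.Iic : ℝ → Set ℝ)) := by
    refine ⟨fun n => Set.Iic (n : ℝ), fun n => ⟨n, rfl⟩, ?_⟩
    ext x
    simp only [Set.mem_iUnion, Set.mem_Iic, Set.mem_univ, iff_true]
    exact (exists_nat_ge x).imp fun n h => h
  have hgen : (Prod.instMeasurableSpace : MeasurableSpace (X × ℝ)) =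
      MeasurableSpace.generateFrom
        (Set.image2 (· ×ˢ ·) {s : Set X | MeasurableSet s}
          (Set.range (Set.Iic : ℝ → Set ℝ))) := by
    have h := generateFrom_prod_eq (C := {s : Set X | MeasurableSet s})
      (D := Set.range (Set.Iic : ℝ → Set ℝ)) isCountablySpanning_measurableSet hIic
    rw [MeasurableSpace.generateFrom_measurableSet] at h
    have hbR : (Real.measurableSpace : MeasurableSpace ℝ) =
        MeasurableSpace.generateFrom (Set.range (Set.Iic : ℝ → Set ℝ)) := by
      rw [Real.borelSpace.measurable_eq]
      exact borel_eq_generateFrom_Iic ℝ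
    rw [← hbR] at h
    exact h
  have : IsProbabilityMeasure (((ρ.fst).prod unif).map (fun p : X × ℝ => (p.1, qtl ρ p))) :=
    Measure.isProbabilityMeasure_map hmap_meas.aemeasurable
  refine MeasureTheory.ext_of_generate_finite _ hgen
    (MeasurableSpace.isPiSystem_measurableSet.prod isPiSystem_Iic) ?_ (by
      rw [this.measure_univ, hprob.measure_univ])
  rintro _ ⟨A, hA, _, ⟨s, rfl⟩, rfl⟩
  rw [Measure.map_apply hmap_meas (hA.prod measurableSet_Iic)]
  have hpre : (fun p : X × ℝ => (p.1, qtl ρ p)) ⁻¹' (A ×ˢ Set.Iic s)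
      = {p : X × ℝ | p.1 ∈ A ∧ qtl ρ p ≤ s} := rfl
  rw [hpre]
  have hpre_meas : MeasurableSet {p : X × ℝ | p.1 ∈ A ∧ qtl ρ p ≤ s} := by
    exact (measurable_fst hA).inter ((measurable_qtl ρ) measurableSet_Iic)
  rw [Measure.prod_apply hpre_meas]
  have hint : ∫⁻ a, unif (Prod.mk a ⁻¹' {p : X × ℝ | p.1 ∈ A ∧ qtl ρ p ≤ s}) ∂ρ.fst
      = ∫⁻ a in A, ENNReal.ofReal (condCDF ρ a s) ∂ρ.fst := by
    rw [← lintegral_indicator hA]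
    congr 1
    funext a
    by_cases ha : a ∈ A
    · have : Prod.mk a ⁻¹' {p : X × ℝ | p.1 ∈ A ∧ qtl ρ p ≤ s}
          = {u : ℝ | qtl ρ (a, u) ≤ s} := by
        ext u; simp [ha]
      rw [this, unif_qtl_Iic, Set.indicator_of_mem ha]
    · have : Prod.mk a ⁻¹' {p : X × ℝ | p.1 ∈ A ∧ qtl ρ p ≤ s} = (∅ : Set ℝ) := by
        ext u; simp [ha]
      rw [this, Set.indicator_of_notMem ha]
      simp
  rw [hint, setLIntegral_condCDF ρ s hA]

end Quantile

set_option synthInstance.maxHeartbeats 1000000 in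
instance : StandardBorelSpace C(ℝ, ℂ) := inferInstance

end QSkor

theorem quantitative_skorokhod'
    (C c α β κ θ : ℝ) (hC : 1 ≤ C) (hc0 : 0 < c) (hc1 : c ≤ 1)
    (hα0 : 0 < α) (hα1 : α ≤ 1) (hβ : 0 < β) (hκ0 : 0 < κ) (hκ1 : κ ≤ 1) (hθ : 0 < θ) :
    ∃ C' c' η : ℝ, 1 ≤ C' ∧ 0 < c' ∧ 0 < η ∧
      ∀ (ν : Measure (CEspace θ)) (μ : ℕ → Measure (CEspace θ)),
        IsProbabilityMeasure ν → (∀ k, IsProbabilityMeasure (μ k)) →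
        (∀ R lam : ℝ, 10 ≤ R → 0 < lam →
          ν {φ : CEspace θ |
                ENNReal.ofReal (C * (Real.log R + lam) ^ ((1:ℝ)/2)) ≤
                  holderE α (Set.Icc (-R) R) φ.toFun} ≤
              ENNReal.ofReal (C * Real.exp (-c * lam)) ∧
            ∀ k : ℕ,
              μ k {φ : CEspace θ |
                  ENNReal.ofReal (C * (Real.log R + lam) ^ ((1:ℝ)/2)) ≤
                    holderE α (Set.Icc (-R) R) φ.toFun} ≤
                ENNReal.ofReal (C * Real.exp (-c * lam))) →
        (∀ x a b : ℝ, a < b →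
          ν {φ : CEspace θ | (φ.toFun x).re ∈ Set.Icc a b} ≤ ENNReal.ofReal (C * (b - a) ^ κ) ∧
            ν {φ : CEspace θ | (φ.toFun x).im ∈ Set.Icc a b} ≤
              ENNReal.ofReal (C * (b - a) ^ κ) ∧
            ∀ k : ℕ,
              μ k {φ : CEspace θ | (φ.toFun x).re ∈ Set.Icc a b} ≤
                  ENNReal.ofReal (C * (b - a) ^ κ) ∧
                μ k {φ : CEspace θ | (φ.toFun x).im ∈ Set.Icc a b} ≤
                  ENNReal.ofReal (C * (b - a) ^ κ)) →
        (∀ k : ℕ, ∃ γ : Measure (CEspace θ × CEspace θ), IsProbabilityMeasure γ ∧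
            γ.map Prod.fst = ν ∧ γ.map Prod.snd = μ k ∧
            (∫⁻ p, (⨆ x : ℝ,
                ENNReal.ofReal (Real.exp (-θ * |x|) * ‖p.1.toFun x - p.2.toFun x‖)) ∂γ) ≤
              ENNReal.ofReal (C * Real.exp (-c * ((2:ℝ) ^ k) ^ β))) →
        ∃ (Ω : Type) (mΩ : MeasurableSpace Ω) (P : Measure Ω), IsProbabilityMeasure P ∧
          ∃ (Φ : ℕ → Ω → CEspace θ) (Φlim : Ω → CEspace θ),
            (∀ k, Measurable (Φ k)) ∧ Measurable Φlim ∧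
            (∀ k, P.map (Φ k) = μ k) ∧ P.map Φlim = ν ∧
            ∀ k : ℕ,
              P {ω | ∃ x : ℝ, |x| ≤ ((2:ℝ) ^ k) ^ η ∧
                    ((2:ℝ) ^ k) ^ (-η) < ‖(Φlim ω).toFun x - (Φ k ω).toFun x‖} ≤
                ENNReal.ofReal (C' * Real.exp (-c' * ((2:ℝ) ^ k) ^ η)) := by
  classical
  open QSkor in
  obtain ⟨e, he⟩ := MeasureTheory.exists_measurableEmbedding_real C(ℝ, ℂ)
  set η : ℝ := β / 2 with hηdef
  have hη : 0 < η := by positivity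
  set C' : ℝ := C * Real.exp ((θ + 2) ^ 2 / (4 * c)) with hC'def
  have hC' : 1 ≤ C' := by
    have h1 : (1:ℝ) ≤ Real.exp ((θ + 2) ^ 2 / (4 * c)) := Real.one_le_exp (by positivity)
    nlinarith
  refine ⟨C', 1, η, hC', one_pos, hη, ?_⟩
  intro ν μ hν hμ hyp1 _hyp2 hyp3
  haveI := hν
  haveI := fun k => hμ k
  set m : CEspace θ → ℝ := fun φ => e (QSkor.ι φ) with hmdef
  have hm : Measurable m := he.measurable.comp QSkor.continuous_ι.measurable
  set S : Set (CEspace θ) := ⋃ n, QSkor.Sn θ n with hSdef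
  have hSmeas : MeasurableSet S := by
    refine MeasurableSet.iUnion fun n => ?_
    exact (QSkor.isClosed_Sn θ n).measurableSet
  have hνS : ν Sᶜ = 0 := QSkor.tight_aux hC hc0 ν fun R lam hR hlam => (hyp1 R lam hR hlam).1
  have hμS : ∀ k, μ k Sᶜ = 0 := fun k =>
    QSkor.tight_aux hC hc0 (μ k) fun R lam hR hlam => (hyp1 R lam hR hlam).2 k
  have hr : Measurable (QSkor.rinv θ e) := QSkor.measurable_rinv hθ he
  have hrm : ∀ φ ∈ S, QSkor.rinv θ e (m φ) = φ := fun φ h => QSkor.rinv_eq he.injective h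
  choose γ hγprob hγfst hγsnd hγint using hyp3
  haveI := fun k => hγprob k
  set pm : CEspace θ × CEspace θ → CEspace θ × ℝ := fun p => (p.1, m p.2) with hpmdef
  have hpm : Measurable pm := measurable_fst.prodMk (hm.comp measurable_snd)
  set ρ : ℕ → Measure (CEspace θ × ℝ) := fun k => (γ k).map pm with hρdef
  haveI hρprob : ∀ k, IsProbabilityMeasure (ρ k) := fun k =>
    Measure.isProbabilityMeasure_map hpm.aemeasurable
  have hρfst : ∀ k, (ρ k).fst = ν := by
    intro k
    have h1 : (ρ k).fst = ((γ k).map pm).map Prod.fst := rfl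
    rw [h1, Measure.map_map measurable_fst hpm]
    have h2 : (Prod.fst ∘ pm) = (Prod.fst : CEspace θ × CEspace θ → CEspace θ) := rfl
    rw [h2, hγfst]
  -- the common probability space
  refine ⟨CEspace θ × ℝ, inferInstance, ν.prod QSkor.unif, inferInstance, ?_⟩
  set P : Measure (CEspace θ × ℝ) := ν.prod QSkor.unif with hPdef
  set Φ : ℕ → CEspace θ × ℝ → CEspace θ :=
    fun k ω => QSkor.rinv θ e (QSkor.qtl (ρ k) ω) with hΦdef
  have hΦmeas : ∀ k, Measurable (Φ k) := fun k => hr.comp (QSkor.measurable_qtl (ρ k))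
  refine ⟨Φ, Prod.fst, hΦmeas, measurable_fst, ?_, ?_, ?_⟩
  · -- laws of the Φ k
    intro k
    set T : CEspace θ × ℝ → CEspace θ × ℝ := fun p => (p.1, QSkor.qtl (ρ k) p) with hTdef
    have hT : Measurable T := measurable_fst.prodMk (QSkor.measurable_qtl (ρ k))
    have hTlaw : P.map T = ρ k := by
      have := QSkor.map_qtl_eq (ρ k) (hρprob k)
      rwa [hρfst k] at this
    have h1 : P.map (Φ k) = (P.map T).map (QSkor.rinv θ e ∘ Prod.snd) := by
      rw [Measure.map_map (hr.comp measurable_snd) hT]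
      rfl
    have h2 : (ρ k).map (QSkor.rinv θ e ∘ Prod.snd)
        = ((γ k).map Prod.snd).map (QSkor.rinv θ e ∘ m) := by
      rw [hρdef]
      rw [Measure.map_map (hr.comp measurable_snd) hpm,
        Measure.map_map (hr.comp hm) measurable_snd]
      rfl
    have h3 : ((γ k).map Prod.snd).map (QSkor.rinv θ e ∘ m) = μ k := by
      rw [hγsnd]
      have hae : (QSkor.rinv θ e ∘ m) =ᵐ[μ k] id := by
        have : {φ : CEspace θ | ¬ (QSkor.rinv θ e ∘ m) φ = id φ} ⊆ Sᶜ := by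
          intro φ hφ
          simp only [Set.mem_setOf_eq, Function.comp_apply, id_eq] at hφ
          intro hS
          exact hφ (hrm φ hS)
        exact measure_mono_null this (hμS k)
      rw [Measure.map_congr hae, Measure.map_id]
    rw [h1, hTlaw, h2, h3]
  · -- law of Φlim
    simp [hPdef, measure_univ]
  · -- the probability bound
    intro k
    set L : ℝ := (2:ℝ) ^ k with hLdef
    have hL1 : (1:ℝ) ≤ L := one_le_pow₀ (by norm_num)
    have hL0 : (0:ℝ) < L := by positivity
    set t : ℝ := L ^ η with htdef
    have ht1 : (1:ℝ) ≤ t := by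
      have := Real.rpow_le_rpow (by norm_num : (0:ℝ) ≤ 1) hL1 hη.le
      rwa [Real.one_rpow] at this
    have ht0 : (0:ℝ) < t := by linarith
    have htop : L ^ (-η) = t⁻¹ := by rw [htdef, Real.rpow_neg hL0.le]
    set δ : ℝ := Real.exp (-θ * t) * t⁻¹ with hδdef
    have hδ0 : 0 < δ := by positivity
    set D : CEspace θ × CEspace θ → ℝ≥0∞ := fun p =>
      ⨆ q : ℚ, ENNReal.ofReal (Real.exp (-θ * |(q:ℝ)|) * ‖p.1.toFun q - p.2.toFun q‖)
      with hDdef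
    have hD : Measurable D := by
      refine Measurable.iSup fun q => ?_
      have h1 : Measurable fun p : CEspace θ × CEspace θ =>
          ‖p.1.toFun q - p.2.toFun q‖ := by
        exact (((QSkor.continuous_eval (q:ℝ)).measurable.comp measurable_fst).sub
          ((QSkor.continuous_eval (q:ℝ)).measurable.comp measurable_snd)).norm
      exact (h1.const_mul _).ennreal_ofReal
    have hV : MeasurableSet {p : CEspace θ × CEspace θ | ENNReal.ofReal δ ≤ D p} :=
      measurableSet_le measurable_const hD
    have hDle : ∀ p : CEspace θ × CEspace θ, D p ≤
        ⨆ x : ℝ, ENNReal.ofReal (Real.exp (-θ * |x|) * ‖p.1.toFun x - p.2.toFun x‖) :=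
      fun p => iSup_le fun q => le_iSup
        (fun x : ℝ => ENNReal.ofReal (Real.exp (-θ * |x|) * ‖p.1.toFun x - p.2.toFun x‖))
        ((q:ℝ))
    have hcheb : (γ k) {p | ENNReal.ofReal δ ≤ D p}
        ≤ ENNReal.ofReal (C * Real.exp (-c * L ^ β)) / ENNReal.ofReal δ := by
      refine le_trans (meas_ge_le_lintegral_div hD.aemeasurable ?_ ENNReal.ofReal_ne_top) ?_
      · simp only [Ne, ENNReal.ofReal_eq_zero, not_le]
        exact hδ0
      · exact ENNReal.div_le_div_right
          (le_trans (lintegral_mono hDle) (hγint k)) _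
    -- the law of the pair (Φlim, Φ k) is γ k
    set pr : CEspace θ × ℝ → CEspace θ × CEspace θ := fun ω => (ω.1, Φ k ω) with hprdef
    have hpr : Measurable pr := measurable_fst.prodMk (hΦmeas k)
    have hlaw : P.map pr = γ k := by
      set T : CEspace θ × ℝ → CEspace θ × ℝ := fun p => (p.1, QSkor.qtl (ρ k) p) with hTdef
      have hT : Measurable T := measurable_fst.prodMk (QSkor.measurable_qtl (ρ k))
      have hTlaw : P.map T = ρ k := by
        have := QSkor.map_qtl_eq (ρ k) (hρprob k)
        rwa [hρfst k] at this
      have hidr : Measurable (Prod.map (id : CEspace θ → CEspace θ) (QSkor.rinv θ e)) := by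
        have : (Prod.map (id : CEspace θ → CEspace θ) (QSkor.rinv θ e))
            = fun p : CEspace θ × ℝ => (p.1, QSkor.rinv θ e p.2) := rfl
        rw [this]
        exact measurable_fst.prodMk (hr.comp measurable_snd)
      have h1 : P.map pr = (P.map T).map (Prod.map id (QSkor.rinv θ e)) := by
        rw [Measure.map_map hidr hT]
        rfl
      rw [h1, hTlaw, hρdef, Measure.map_map hidr hpm]
      have h2 : (Prod.map id (QSkor.rinv θ e) ∘ pm)
          = fun p : CEspace θ × CEspace θ => (p.1, QSkor.rinv θ e (m p.2)) := rfl
      rw [h2]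
      have hae : (fun p : CEspace θ × CEspace θ => (p.1, QSkor.rinv θ e (m p.2)))
          =ᵐ[γ k] id := by
        have hsub : {p : CEspace θ × CEspace θ |
            ¬ (p.1, QSkor.rinv θ e (m p.2)) = id p} ⊆ Prod.snd ⁻¹' Sᶜ := by
          intro p hp
          simp only [Set.mem_setOf_eq, id_eq] at hp
          intro hS
          exact hp (by rw [hrm p.2 hS])
        refine measure_mono_null hsub ?_
        have := Measure.map_apply (μ := γ k) measurable_snd hSmeas.compl
        rw [← this, hγsnd]
        exact hμS k
      rw [Measure.map_congr hae, Measure.map_id]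
    -- inclusion of the bad event
    have hsub : {ω : CEspace θ × ℝ | ∃ x : ℝ, |x| ≤ L ^ η ∧
          L ^ (-η) < ‖(ω.1).toFun x - (Φ k ω).toFun x‖}
        ⊆ pr ⁻¹' {p | ENNReal.ofReal δ ≤ D p} := by
      rintro ω ⟨x, hx, hlt⟩
      rw [htop] at hlt
      set φ := ω.1
      set ψ := Φ k ω
      have hf : Continuous fun y : ℝ => Real.exp (-θ * |y|) * ‖φ.toFun y - ψ.toFun y‖ := by
        have h1 : Continuous fun y : ℝ => Real.exp (-θ * |y|) := by fun_prop
        exact h1.mul ((φ.continuous_toFun.sub ψ.continuous_toFun).norm)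
      have hfx : δ < Real.exp (-θ * |x|) * ‖φ.toFun x - ψ.toFun x‖ := by
        have h1 : Real.exp (-θ * t) ≤ Real.exp (-θ * |x|) := by
          apply Real.exp_le_exp.mpr
          have : θ * |x| ≤ θ * t := mul_le_mul_of_nonneg_left hx hθ.le
          linarith
        calc δ = Real.exp (-θ * t) * t⁻¹ := rfl
        _ ≤ Real.exp (-θ * |x|) * t⁻¹ := mul_le_mul_of_nonneg_right h1 (by positivity)
        _ < Real.exp (-θ * |x|) * ‖φ.toFun x - ψ.toFun x‖ :=
            mul_lt_mul_of_pos_left hlt (Real.exp_pos _)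
      have hopen : IsOpen {y : ℝ | δ < Real.exp (-θ * |y|) * ‖φ.toFun y - ψ.toFun y‖} :=
        isOpen_lt continuous_const hf
      obtain ⟨q, hq⟩ := Rat.denseRange_cast.exists_mem_open hopen ⟨x, hfx⟩
      show ENNReal.ofReal δ ≤ D (pr ω)
      refine le_trans (ENNReal.ofReal_le_ofReal hq.le) ?_
      exact le_iSup (fun q : ℚ => ENNReal.ofReal
        (Real.exp (-θ * |(q:ℝ)|) * ‖φ.toFun q - ψ.toFun q‖)) q
    -- final arithmetic
    have hreal : C * Real.exp (-c * L ^ β) / δ ≤ C' * Real.exp (-1 * t) := by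
      have hLβ : L ^ β = t * t := by
        rw [htdef, ← Real.rpow_add hL0]
        congr 1
        rw [hηdef]; ring
      have hδinv : δ⁻¹ = Real.exp (θ * t) * t := by
        rw [hδdef, mul_inv, inv_inv, ← Real.exp_neg]
        ring_nf
      rw [div_eq_mul_inv, hδinv, hC'def]
      have hkey : Real.exp (-c * L ^ β) * (Real.exp (θ * t) * t)
          ≤ Real.exp ((θ + 2) ^ 2 / (4 * c)) * Real.exp (-1 * t) := by
        have hte : t ≤ Real.exp t := by
          have := Real.add_one_le_exp t
          linarith
        calc Real.exp (-c * L ^ β) * (Real.exp (θ * t) * t)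
            ≤ Real.exp (-c * L ^ β) * (Real.exp (θ * t) * Real.exp t) := by
              refine mul_le_mul_of_nonneg_left ?_ (Real.exp_pos _).le
              exact mul_le_mul_of_nonneg_left hte (Real.exp_pos _).le
        _ = Real.exp (-c * (t * t) + (θ * t + t)) := by
              rw [hLβ, ← Real.exp_add, ← Real.exp_add]
        _ ≤ Real.exp ((θ + 2) ^ 2 / (4 * c) + -1 * t) := by
              apply Real.exp_le_exp.mpr
              rw [← sub_nonneg]
              have h4c : (0:ℝ) < 4 * c := by linarith
              have hineq : ((θ + 2) ^ 2 / (4 * c) + -1 * t) - (-c * (t * t) + (θ * t + t))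
                  = (θ + 2) ^ 2 / (4 * c) - (θ + 2) * t + c * t ^ 2 := by ring
              rw [hineq]
              have h2 : (θ + 2) ^ 2 / (4 * c) - (θ + 2) * t + c * t ^ 2
                  = (2 * c * t - (θ + 2)) ^ 2 / (4 * c) := by
                field_simp
                ring
              rw [h2]
              positivity
        _ = Real.exp ((θ + 2) ^ 2 / (4 * c)) * Real.exp (-1 * t) := by
              rw [← Real.exp_add]
      calc C * Real.exp (-c * L ^ β) * (Real.exp (θ * t) * t)
          = C * (Real.exp (-c * L ^ β) * (Real.exp (θ * t) * t)) := by ring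
      _ ≤ C * (Real.exp ((θ + 2) ^ 2 / (4 * c)) * Real.exp (-1 * t)) :=
          mul_le_mul_of_nonneg_left hkey (by linarith)
      _ = C * Real.exp ((θ + 2) ^ 2 / (4 * c)) * Real.exp (-1 * t) := by ring
    calc P {ω : CEspace θ × ℝ | ∃ x : ℝ, |x| ≤ L ^ η ∧
          L ^ (-η) < ‖(ω.1).toFun x - (Φ k ω).toFun x‖}
        ≤ P (pr ⁻¹' {p | ENNReal.ofReal δ ≤ D p}) := measure_mono hsub
    _ = (P.map pr) {p | ENNReal.ofReal δ ≤ D p} := (Measure.map_apply hpr hV).symm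
    _ = (γ k) {p | ENNReal.ofReal δ ≤ D p} := by rw [hlaw]
    _ ≤ ENNReal.ofReal (C * Real.exp (-c * L ^ β)) / ENNReal.ofReal δ := hcheb
    _ = ENNReal.ofReal (C * Real.exp (-c * L ^ β) / δ) :=
        (ENNReal.ofReal_div_of_pos hδ0).symm
    _ ≤ ENNReal.ofReal (C' * Real.exp (-1 * t)) := ENNReal.ofReal_le_ofReal hreal


/-- **Quantitative Skorokhod representation theorem** (Proposition A.1). Given probability
measures `μ_L` (for dyadic `L = 2^k`) and `ν = μ_∞` on `CE^θ(ℝ)` with uniform Hölder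
regularity, one-point density estimates, and exponential Wasserstein convergence
`𝒲(μ_∞, μ_L) ≤ C e^{-cL^β}`, there is a single probability space carrying random variables
`Φ_L` with laws `μ_L` and `Φ_∞` with law `μ_∞` such that
`P(‖Φ_∞ - Φ_L‖_{C⁰([-L^η, L^η])} > L^{-η}) ≤ C' e^{-c' L^η}` for all dyadic `L`. -/
theorem quantitative_skorokhod
    (C c α β κ θ : ℝ) (hC : 1 ≤ C) (hc0 : 0 < c) (hc1 : c ≤ 1)
    (hα0 : 0 < α) (hα1 : α ≤ 1) (hβ : 0 < β) (hκ0 : 0 < κ) (hκ1 : κ ≤ 1) (hθ : 0 < θ) :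
    ∃ C' c' η : ℝ, 1 ≤ C' ∧ 0 < c' ∧ 0 < η ∧
      ∀ (ν : Measure (CEspace θ)) (μ : ℕ → Measure (CEspace θ)),
        IsProbabilityMeasure ν → (∀ k, IsProbabilityMeasure (μ k)) →
        -- (i) Hölder regularity, uniformly in `L` (including `L = ∞`)
        (∀ R lam : ℝ, 10 ≤ R → 0 < lam →
          ν {φ : CEspace θ |
                ENNReal.ofReal (C * (Real.log R + lam) ^ ((1:ℝ)/2)) ≤
                  holderE α (Set.Icc (-R) R) φ.toFun} ≤
              ENNReal.ofReal (C * Real.exp (-c * lam)) ∧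
            ∀ k : ℕ,
              μ k {φ : CEspace θ |
                  ENNReal.ofReal (C * (Real.log R + lam) ^ ((1:ℝ)/2)) ≤
                    holderE α (Set.Icc (-R) R) φ.toFun} ≤
                ENNReal.ofReal (C * Real.exp (-c * lam))) →
        -- (ii) one-point density estimates, uniformly in `L` (including `L = ∞`)
        (∀ x a b : ℝ, a < b →
          ν {φ : CEspace θ | (φ.toFun x).re ∈ Set.Icc a b} ≤ ENNReal.ofReal (C * (b - a) ^ κ) ∧
            ν {φ : CEspace θ | (φ.toFun x).im ∈ Set.Icc a b} ≤
              ENNReal.ofReal (C * (b - a) ^ κ) ∧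
            ∀ k : ℕ,
              μ k {φ : CEspace θ | (φ.toFun x).re ∈ Set.Icc a b} ≤
                  ENNReal.ofReal (C * (b - a) ^ κ) ∧
                μ k {φ : CEspace θ | (φ.toFun x).im ∈ Set.Icc a b} ≤
                  ENNReal.ofReal (C * (b - a) ^ κ)) →
        -- (iii) Wasserstein estimate: a coupling of `ν` and `μ k` with small transport cost
        (∀ k : ℕ, ∃ γ : Measure (CEspace θ × CEspace θ), IsProbabilityMeasure γ ∧
            γ.map Prod.fst = ν ∧ γ.map Prod.snd = μ k ∧
            (∫⁻ p, (⨆ x : ℝ,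
                ENNReal.ofReal (Real.exp (-θ * |x|) * ‖p.1.toFun x - p.2.toFun x‖)) ∂γ) ≤
              ENNReal.ofReal (C * Real.exp (-c * ((2:ℝ) ^ k) ^ β))) →
        -- conclusion: a common probability space with the coupling properties (a) and (b)
        ∃ (Ω : Type) (mΩ : MeasurableSpace Ω) (P : Measure Ω), IsProbabilityMeasure P ∧
          ∃ (Φ : ℕ → Ω → CEspace θ) (Φlim : Ω → CEspace θ),
            (∀ k, Measurable (Φ k)) ∧ Measurable Φlim ∧
            (∀ k, P.map (Φ k) = μ k) ∧ P.map Φlim = ν ∧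
            ∀ k : ℕ,
              P {ω | ∃ x : ℝ, |x| ≤ ((2:ℝ) ^ k) ^ η ∧
                    ((2:ℝ) ^ k) ^ (-η) < ‖(Φlim ω).toFun x - (Φ k ω).toFun x‖} ≤
                ENNReal.ofReal (C' * Real.exp (-c' * ((2:ℝ) ^ k) ^ η)) :=
  quantitative_skorokhod' C c α β κ θ hC hc0 hc1 hα0 hα1 hβ hκ0 hκ1 hθ
end
end
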